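/- arXiv:2305.12584 — 7 statements merged into one kernel-verified Lean document; each statement's English description precedes it below -/
import Mathlib

section
/- A Banach space B of functions on X is an RKBS (all point evaluations continuous) if and only if there exist a Banach space W and a map Φ : X → W* with span{Φ(x) : x ∈ X} weak* dense in W*, such that B = {x ↦ ⟨Φ(x), u⟩ : u ∈ W} with ‖⟨Φ(·), u⟩‖_B = ‖u‖_W for all u ∈ W. -/
open NormedSpace

/-- Exact finite interpolation: any element of `WeakDual ℝ B` can be matched, on any
finite set of points, by an element of a span of functionals whose common kernel
(in the sense below) is trivial. -/
lemma interp {B : Type} [NormedAddCommGroup B] [NormedSpace ℝ B]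
    (S : Set (WeakDual ℝ B))
    (hS : ∀ v : B, (∀ ψ ∈ S, ψ v = 0) → v = 0)
    (φ : WeakDual ℝ B) (I : Finset B) :
    ∃ ψ ∈ Submodule.span ℝ S, ∀ u ∈ I, ψ u = φ u := by
  classical
  set T : WeakDual ℝ B →ₗ[ℝ] (I → ℝ) :=
    { toFun := fun ψ => fun i => ψ (i : B)
      map_add' := fun a b => rfl
      map_smul' := fun c a => rfl } with hT
  set p : Submodule ℝ (I → ℝ) := (Submodule.span ℝ S).map T with hp
  have hmem : T φ ∈ p := by
    by_contra h
    obtain ⟨c, hc0, hcbot⟩ := p.exists_dual_map_eq_bot_of_notMem h inferInstance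
    -- the vector determined by the coefficients of `c`
    set v : B := ∑ i : I, c (fun j => if i = j then 1 else 0) • (i : B) with hv
    have key : ∀ ψ : WeakDual ℝ B, c (T ψ) = ψ v := by
      intro ψ
      rw [c.pi_apply_eq_sum_univ (T ψ), hv, map_sum]
      refine Finset.sum_congr rfl fun i _ => ?_
      simp [hT, smul_eq_mul, mul_comm]
      exact Or.inl rfl
    have hv0 : v = 0 := by
      refine hS v fun ψ hψ => ?_
      rw [← key ψ]
      have : T ψ ∈ p := Submodule.mem_map_of_mem (Submodule.subset_span hψ)
      have : c (T ψ) ∈ p.map c := Submodule.mem_map_of_mem this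
      rw [hcbot] at this
      simpa using this
    exact hc0 (by rw [key φ, hv0, map_zero])
  obtain ⟨ψ, hψ, hTψ⟩ := hmem
  exact ⟨ψ, hψ, fun u hu => by
    have := congrFun hTψ ⟨u, hu⟩
    exact this⟩

/-- Feature-map characterization of RKBSs: a Banach space `B` of functions on
`X` (realized by an injective linear map `j : B →ₗ (X → ℝ)`) has all point
evaluations continuous iff there are a Banach space `W` and a feature map
`Φ : X → W*` whose span is weak* dense in `W*`, such that `B` consists exactly
of the functions `x ↦ ⟨Φ x, u⟩`, `u ∈ W`, with `‖⟨Φ ·, u⟩‖_B = ‖u‖_W`. -/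
theorem stmt_3 {X B : Type} [NormedAddCommGroup B] [NormedSpace ℝ B] [CompleteSpace B]
    (j : B →ₗ[ℝ] (X → ℝ)) (hj : Function.Injective j) :
    (∀ x : X, Continuous fun f : B => j f x) ↔
    ∃ (W : Type) (_ : NormedAddCommGroup W) (_ : NormedSpace ℝ W) (_ : CompleteSpace W)
      (Φ : X → W →L[ℝ] ℝ),
      Dense (↑(Submodule.span ℝ
          (Set.range fun x : X => StrongDual.toWeakDual (Φ x))) :
        Set (WeakDual ℝ W)) ∧
      (∀ f : B, ∃ u : W, ∀ x : X, j f x = Φ x u) ∧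
      (∀ u : W, ∃ f : B, (∀ x : X, j f x = Φ x u) ∧ ‖f‖ = ‖u‖) := by
  constructor
  · intro h
    refine ⟨B, inferInstance, inferInstance, inferInstance,
      fun x => ⟨(LinearMap.proj x).comp j, h x⟩, ?_, fun f => ⟨f, fun x => rfl⟩,
      fun u => ⟨u, fun x => rfl, rfl⟩⟩
    -- density
    set S : Set (WeakDual ℝ B) :=
      Set.range fun x : X => StrongDual.toWeakDual (⟨(LinearMap.proj x).comp j, h x⟩ : B →L[ℝ] ℝ)
    intro φ
    have hS : ∀ v : B, (∀ ψ ∈ S, ψ v = 0) → v = 0 := by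
      intro v hv
      apply hj
      ext x
      have := hv _ ⟨x, rfl⟩
      rw [map_zero, Pi.zero_apply]
      exact this
    -- use the embedding into the product space
    have hinj : Function.Injective (topDualPairing ℝ B) := by
      intro a b hab
      ext u
      exact congrFun (congrArg (fun (l : B →ₗ[ℝ] ℝ) => (l : B → ℝ)) hab) u
    have hemb := WeakBilin.isEmbedding (𝕜 := ℝ) hinj
    erw [hemb.toIsInducing.closure_eq_preimage_closure_image]
    erw [Set.mem_preimage, mem_closure_iff_nhds]
    intro V hV
    rw [nhds_pi, Filter.mem_pi] at hV
    obtain ⟨I, hIfin, t, ht, htV⟩ := hV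
    obtain ⟨ψ, hψ, hψI⟩ := interp S hS φ hIfin.toFinset
    refine ⟨fun u => ψ u, htV fun u hu => ?_, ⟨ψ, hψ, rfl⟩⟩
    have h1 : ψ u = φ u := hψI u (hIfin.mem_toFinset.mpr hu)
    show ψ u ∈ t u
    rw [h1]
    exact mem_of_mem_nhds (ht u)
  · rintro ⟨W, _, _, _, Φ, _, h2, h3⟩
    intro x
    have bound : ∀ f : B, ‖j f x‖ ≤ ‖Φ x‖ * ‖f‖ := by
      intro f
      obtain ⟨u, hu⟩ := h2 f
      obtain ⟨f', hf', hnorm⟩ := h3 u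
      have : f = f' := hj (by ext y; rw [hu y, hf' y])
      rw [hu x]
      calc ‖Φ x u‖ ≤ ‖Φ x‖ * ‖u‖ := ContinuousLinearMap.le_opNorm (Φ x) u
        _ = ‖Φ x‖ * ‖f‖ := by rw [← hnorm, this]
    exact AddMonoidHomClass.continuous_of_bound ((LinearMap.proj x).comp j) ‖Φ x‖ bound
end

section
/- Let B be a Banach space with predual B_*, ν_1,…,ν_n ∈ B_* linearly independent, and y ∈ ℝⁿ \ {0}. If f̂ and ĝ are both solutions of the minimum norm interpolation problem inf{‖f‖_B : ⟨ν_j, f⟩ = y_j ∀j}, then J(f̂) = J(ĝ), where J(f) := {ν ∈ span{ν_1,…,ν_n} : f ∈ ‖ν‖_{B_*} ∂‖·‖_{B_*}(ν)}. -/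
/-!
Two minimal-norm interpolants `f, g` have the same norm (each is at most the other) and agree
on `span {ν_j}`. On the other hand `f ∈ ‖μ‖ ∂‖·‖_{B_*}(μ)` holds iff `‖f‖ = ‖μ‖` and
`f μ = ‖μ‖²` (for `μ = 0` both say `f = 0`), a condition involving only these two data.
-/

open Pointwise
open scoped Classical

/-- The subdifferential of the dual norm `‖·‖_{B_*}` at `μ ∈ P`, viewed as a
subset of `B = P →L[ℝ] ℝ`: the norming functionals of `μ` for `μ ≠ 0`, and the
closed unit ball for `μ = 0`. -/
noncomputable def subdiffDualNorm {P : Type*} [NormedAddCommGroup P] [NormedSpace ℝ P]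
    (μ : P) : Set (P →L[ℝ] ℝ) :=
  if μ = 0 then Metric.closedBall 0 1 else {w | ‖w‖ = 1 ∧ w μ = ‖μ‖}

lemma mem_norm_smul_subdiffDualNorm_iff {P : Type*} [NormedAddCommGroup P] [NormedSpace ℝ P]
    (μ : P) (f : P →L[ℝ] ℝ) :
    f ∈ ‖μ‖ • subdiffDualNorm μ ↔ ‖f‖ = ‖μ‖ ∧ f μ = ‖μ‖ * ‖μ‖ := by
  by_cases hμ : μ = 0
  · subst hμ
    have hball : (Metric.closedBall (0 : P →L[ℝ] ℝ) 1).Nonempty := ⟨0, by simp⟩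
    simp [subdiffDualNorm, Set.zero_smul_set hball]
  have hμn : ‖μ‖ ≠ 0 := norm_ne_zero_iff.mpr hμ
  rw [subdiffDualNorm, if_neg hμ]
  constructor
  · rintro ⟨w, ⟨hw1, hw2⟩, rfl⟩
    simp [norm_smul, hw1, hw2]
  · rintro ⟨h1, h2⟩
    refine ⟨‖μ‖⁻¹ • f, ⟨?_, ?_⟩, smul_inv_smul₀ hμn f⟩
    · rw [norm_smul, h1, norm_inv, norm_norm, inv_mul_cancel₀ hμn]
    · rw [smul_apply, h2, smul_eq_mul, inv_mul_cancel_left₀ hμn]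

theorem stmt_8_general {P : Type*} [NormedAddCommGroup P] [NormedSpace ℝ P]
    {n : ℕ} (ν : Fin n → P)
    (y : Fin n → ℝ) (f g : P →L[ℝ] ℝ)
    (hfM : ∀ j, f (ν j) = y j) (hgM : ∀ j, g (ν j) = y j)
    (hfmin : ∀ h : P →L[ℝ] ℝ, (∀ j, h (ν j) = y j) → ‖f‖ ≤ ‖h‖)
    (hgmin : ∀ h : P →L[ℝ] ℝ, (∀ j, h (ν j) = y j) → ‖g‖ ≤ ‖h‖) :
    {μ : P | μ ∈ Submodule.span ℝ (Set.range ν) ∧ f ∈ ‖μ‖ • subdiffDualNorm μ} =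
    {μ : P | μ ∈ Submodule.span ℝ (Set.range ν) ∧ g ∈ ‖μ‖ • subdiffDualNorm μ} := by
  have hnorm : ‖f‖ = ‖g‖ := le_antisymm (hfmin g hgM) (hgmin f hfM)
  have hagree : Set.EqOn f g (Submodule.span ℝ (Set.range ν)) :=
    LinearMap.eqOn_span (f := f.toLinearMap) (g := g.toLinearMap) <| by
      rintro _ ⟨j, rfl⟩
      simp [hfM, hgM]
  ext μ
  simp only [Set.mem_ofPred_eq, mem_norm_smul_subdiffDualNorm_iff]
  exact and_congr_right fun hμ => by rw [hnorm, hagree hμ]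

/-- Any two solutions `f, g` of the MNI problem determine the same set
`J(·) = {ν ∈ span{ν_j} : · ∈ ‖ν‖ ∂‖·‖_{B_*}(ν)}`. -/
theorem stmt_8 {P : Type*} [NormedAddCommGroup P] [NormedSpace ℝ P] [CompleteSpace P]
    {n : ℕ} (ν : Fin n → P) (hν : LinearIndependent ℝ ν)
    (y : Fin n → ℝ) (hy : y ≠ 0) (f g : P →L[ℝ] ℝ)
    (hfM : ∀ j, f (ν j) = y j) (hgM : ∀ j, g (ν j) = y j)
    (hfmin : ∀ h : P →L[ℝ] ℝ, (∀ j, h (ν j) = y j) → ‖f‖ ≤ ‖h‖)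
    (hgmin : ∀ h : P →L[ℝ] ℝ, (∀ j, h (ν j) = y j) → ‖g‖ ≤ ‖h‖) :
    {μ : P | μ ∈ Submodule.span ℝ (Set.range ν) ∧ f ∈ ‖μ‖ • subdiffDualNorm μ} =
    {μ : P | μ ∈ Submodule.span ℝ (Set.range ν) ∧ g ∈ ‖μ‖ • subdiffDualNorm μ} :=
  stmt_8_general ν y f g hfM hgM hfmin hgmin
end

section
/- Let B be a Banach space with predual B_*, ν_1,…,ν_n ∈ B_* linearly independent, y ∈ ℝⁿ \ {0}, M_y := {f ∈ B : ⟨ν_j, f⟩ = y_j ∀j}, and suppose ν̂ ∈ span{ν_j} satisfies (‖ν̂‖_{B_*} ∂‖·‖_{B_*}(ν̂)) ∩ M_y ≠ ∅. Then the solution set S(y) of the minimum norm interpolation problem equals (‖ν̂‖_{B_*} ∂‖·‖_{B_*}(ν̂)) ∩ M_y. -/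
/-! Every `f ∈ ‖ν'‖ ∂‖·‖_{B_*}(ν')` is characterised by `‖f‖ ≤ ‖ν'‖` and `f ν' = ‖ν'‖²`. Since
`ν' ∈ span {ν_j}`, every interpolant `g ∈ M_y` takes the same value `‖ν'‖²` at `ν'`, so
`‖ν'‖² ≤ ‖g‖ ‖ν'‖` gives `‖g‖ ≥ ‖ν'‖`; thus the minimal norm on `M_y` is `‖ν'‖`, attained exactly
on `(‖ν'‖ ∂‖·‖_{B_*}(ν')) ∩ M_y`. -/

open Pointwise
open scoped Classical

section

variable {P : Type*} [NormedAddCommGroup P] [NormedSpace ℝ P]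

theorem norm_le_norm_of_apply_eq_norm_sq {μ : P} {f : P →L[ℝ] ℝ} (hf : f μ = ‖μ‖ ^ 2) :
    ‖μ‖ ≤ ‖f‖ := by
  have hbound : ‖μ‖ * ‖μ‖ ≤ ‖f‖ * ‖μ‖ :=
    calc ‖μ‖ * ‖μ‖ = f μ := by rw [hf, sq]
      _ ≤ |f μ| := le_abs_self _
      _ ≤ ‖f‖ * ‖μ‖ := f.le_opNorm μ
  nlinarith [norm_nonneg μ, norm_nonneg f]

theorem mem_smul_subdiffDualNorm_iff {μ : P} {f : P →L[ℝ] ℝ} :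
    f ∈ ‖μ‖ • subdiffDualNorm μ ↔ ‖f‖ ≤ ‖μ‖ ∧ f μ = ‖μ‖ ^ 2 := by
  by_cases hμ : μ = 0
  · subst hμ
    simp [subdiffDualNorm, Set.zero_smul_set (Metric.nonempty_closedBall.2 zero_le_one)]
  have hc : ‖μ‖ ≠ 0 := norm_ne_zero_iff.2 hμ
  rw [subdiffDualNorm, if_neg hμ, Set.mem_smul_set_iff_inv_smul_mem₀ hc]
  simp only [Set.mem_ofPred_eq, norm_smul, norm_inv, norm_norm, smul_apply, smul_eq_mul]
  constructor
  · rintro ⟨hnorm, happly⟩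
    rw [inv_mul_eq_one₀ hc] at hnorm
    rw [inv_mul_eq_iff_eq_mul₀ hc] at happly
    exact ⟨hnorm.symm.le, by rw [happly, sq]⟩
  · rintro ⟨hnorm, happly⟩
    have hnorm' : ‖f‖ = ‖μ‖ := le_antisymm hnorm (norm_le_norm_of_apply_eq_norm_sq happly)
    rw [hnorm', happly]
    exact ⟨inv_mul_cancel₀ hc, by field_simp⟩

end

theorem stmt_9_general {P : Type*} [NormedAddCommGroup P] [NormedSpace ℝ P]
    {n : ℕ} (ν : Fin n → P)
    (y : Fin n → ℝ) (ν' : P)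
    (hν'V : ν' ∈ Submodule.span ℝ (Set.range ν))
    (hne : ((‖ν'‖ • subdiffDualNorm ν') ∩ {f : P →L[ℝ] ℝ | ∀ j, f (ν j) = y j}).Nonempty) :
    {f : P →L[ℝ] ℝ | (∀ j, f (ν j) = y j) ∧
        ∀ g : P →L[ℝ] ℝ, (∀ j, g (ν j) = y j) → ‖f‖ ≤ ‖g‖} =
      (‖ν'‖ • subdiffDualNorm ν') ∩ {f : P →L[ℝ] ℝ | ∀ j, f (ν j) = y j} := by
  obtain ⟨f₀, hf₀, hf₀y⟩ := hne
  rw [mem_smul_subdiffDualNorm_iff] at hf₀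
  have hinterp : ∀ g : P →L[ℝ] ℝ, (∀ j, g (ν j) = y j) → g ν' = ‖ν'‖ ^ 2 := by
    intro g hg
    refine (LinearMap.eqOn_span' (f := (g : P →ₗ[ℝ] ℝ)) (g := (f₀ : P →ₗ[ℝ] ℝ)) ?_ hν'V).trans hf₀.2
    rintro _ ⟨j, rfl⟩
    simp [hg j, hf₀y j]
  ext f
  simp only [Set.mem_ofPred_eq, Set.mem_inter_iff, mem_smul_subdiffDualNorm_iff]
  constructor
  · rintro ⟨hfy, hmin⟩
    exact ⟨⟨(hmin f₀ hf₀y).trans hf₀.1, hinterp f hfy⟩, hfy⟩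
  · rintro ⟨⟨hnorm, -⟩, hfy⟩
    exact ⟨hfy, fun g hg => hnorm.trans (norm_le_norm_of_apply_eq_norm_sq (hinterp g hg))⟩

/-- If `ν' ∈ span{ν_j}` satisfies `(‖ν'‖ ∂‖·‖_{B_*}(ν')) ∩ M_y ≠ ∅`, then the MNI
solution set `S(y)` equals `(‖ν'‖ ∂‖·‖_{B_*}(ν')) ∩ M_y`. -/
theorem stmt_9 {P : Type*} [NormedAddCommGroup P] [NormedSpace ℝ P] [CompleteSpace P]
    {n : ℕ} (ν : Fin n → P) (hν : LinearIndependent ℝ ν)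
    (y : Fin n → ℝ) (hy : y ≠ 0) (ν' : P)
    (hν'V : ν' ∈ Submodule.span ℝ (Set.range ν))
    (hne : ((‖ν'‖ • subdiffDualNorm ν') ∩ {f : P →L[ℝ] ℝ | ∀ j, f (ν j) = y j}).Nonempty) :
    {f : P →L[ℝ] ℝ | (∀ j, f (ν j) = y j) ∧
        ∀ g : P →L[ℝ] ℝ, (∀ j, g (ν j) = y j) → ‖f‖ ≤ ‖g‖} =
      (‖ν'‖ • subdiffDualNorm ν') ∩ {f : P →L[ℝ] ℝ | ∀ j, f (ν j) = y j} :=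
  stmt_9_general ν y ν' hν'V hne
end

section
/- Let B be a Banach space with predual B_*, ν_1,…,ν_n ∈ B_* linearly independent, y ∈ ℝⁿ \ {0}. Let m₀ := inf{‖f‖_B : ⟨ν_j, f⟩ = y_j ∀j} and suppose ĉ ∈ ℝⁿ attains sup{Σ_j c_j y_j : ‖Σ_j c_j ν_j‖_{B_*} = 1}. Then ν̂ := m₀ Σ_j ĉ_j ν_j satisfies: every norm-minimizing interpolant f̂ belongs to ‖ν̂‖_{B_*} ∂‖·‖_{B_*}(ν̂), and in particular (‖ν̂‖_{B_*} ∂‖·‖_{B_*}(ν̂)) ∩ M_y ≠ ∅. -/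
open Pointwise
open scoped Classical

/-- If `c` solves the dual problem of MNI and `m₀` is the MNI infimum, then
`ν' = m₀ • ∑ c_j ν_j` satisfies: every norm-minimizing interpolant lies in
`‖ν'‖ ∂‖·‖_{B_*}(ν')`; in particular `(‖ν'‖ ∂‖·‖_{B_*}(ν')) ∩ M_y ≠ ∅`. -/
theorem stmt_12 {P : Type*} [NormedAddCommGroup P] [NormedSpace ℝ P] [CompleteSpace P]
    {n : ℕ} (ν : Fin n → P) (hν : LinearIndependent ℝ ν)
    (y : Fin n → ℝ) (hy : y ≠ 0) (c : Fin n → ℝ)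
    (hc1 : ‖∑ j, c j • ν j‖ = 1)
    (hcmax : ∀ d : Fin n → ℝ, ‖∑ j, d j • ν j‖ = 1 → ∑ j, d j * y j ≤ ∑ j, c j * y j) :
    ∀ (m₀ : ℝ) (ν' : P),
      m₀ = sInf {r : ℝ | ∃ f : P →L[ℝ] ℝ, (∀ j, f (ν j) = y j) ∧ r = ‖f‖} →
      ν' = m₀ • ∑ j, c j • ν j →
      (∀ f : P →L[ℝ] ℝ, (∀ j, f (ν j) = y j) →
          (∀ g : P →L[ℝ] ℝ, (∀ j, g (ν j) = y j) → ‖f‖ ≤ ‖g‖) →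
          f ∈ ‖ν'‖ • subdiffDualNorm ν') ∧
      ((‖ν'‖ • subdiffDualNorm ν') ∩ {f : P →L[ℝ] ℝ | ∀ j, f (ν j) = y j}).Nonempty := by
  classical
  set u : P := ∑ j, c j • ν j with hu
  set S : ℝ := ∑ j, c j * y j with hS
  -- S is positive
  have hSpos : 0 < S := by
    obtain ⟨j, hj⟩ : ∃ j, y j ≠ 0 := by
      by_contra h; push_neg at h; exact hy (funext h)
    have hνj : ν j ≠ 0 := hν.ne_zero j
    have hνjn : (0:ℝ) < ‖ν j‖ := norm_pos_iff.mpr hνj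
    have hja : |y j| ≠ 0 := abs_ne_zero.mpr hj
    set a : ℝ := |y j| / (y j * ‖ν j‖) with ha
    set d : Fin n → ℝ := fun i => if i = j then a else 0 with hd
    have hsum : ∑ i, d i • ν i = a • ν j := by
      rw [Finset.sum_eq_single j]
      · simp [hd]
      · intro b _ hb; simp [hd, hb]
      · simp
    have hnorm : ‖∑ i, d i • ν i‖ = 1 := by
      rw [hsum, norm_smul, Real.norm_eq_abs, ha, abs_div, abs_mul, abs_abs, abs_norm]
      field_simp
    have hdy : ∑ i, d i * y i = |y j| / ‖ν j‖ := by
      rw [Finset.sum_eq_single j]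
      · simp only [hd, if_pos rfl, ha]
        field_simp
      · intro b _ hb; simp [hd, hb]
      · simp
    have h1 := hcmax d hnorm
    rw [hdy] at h1
    have h2 : 0 < |y j| / ‖ν j‖ := div_pos (abs_pos.mpr hj) hνjn
    linarith
  -- key inequality
  have key : ∀ d : Fin n → ℝ, ∑ i, d i * y i ≤ S * ‖∑ i, d i • ν i‖ := by
    intro d
    rcases eq_or_ne (∑ i, d i • ν i) 0 with h0 | h0
    · have hd0 : ∀ i, d i = 0 := Fintype.linearIndependent_iff.mp hν d h0
      simp [hd0, h0]
    · set t : ℝ := ‖∑ i, d i • ν i‖ with ht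
      have htpos : 0 < t := norm_pos_iff.mpr h0
      set d' : Fin n → ℝ := fun i => t⁻¹ * d i with hd'
      have hsum : ∑ i, d' i • ν i = t⁻¹ • ∑ i, d i • ν i := by
        rw [Finset.smul_sum]
        refine Finset.sum_congr rfl fun i _ => ?_
        rw [hd', smul_smul]
      have hnorm : ‖∑ i, d' i • ν i‖ = 1 := by
        rw [hsum, norm_smul, Real.norm_eq_abs, abs_inv, abs_of_pos htpos, ← ht,
          inv_mul_cancel₀ htpos.ne']
      have h1 := hcmax d' hnorm
      have h2 : ∑ i, d' i * y i = t⁻¹ * ∑ i, d i * y i := by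
        rw [Finset.mul_sum]
        exact Finset.sum_congr rfl fun i _ => by rw [hd', mul_assoc]
      rw [h2] at h1
      have h3 := mul_le_mul_of_nonneg_left h1 htpos.le
      rwa [← mul_assoc, mul_inv_cancel₀ htpos.ne', one_mul, mul_comm t S] at h3
  -- lower bound for interpolants
  have hlb : ∀ f : P →L[ℝ] ℝ, (∀ j, f (ν j) = y j) → S ≤ ‖f‖ := by
    intro f hf
    have hfu : f u = S := by
      rw [hu, map_sum, hS]
      exact Finset.sum_congr rfl fun i _ => by rw [map_smul, hf i, smul_eq_mul]
    calc S = f u := hfu.symm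
      _ ≤ |f u| := le_abs_self _
      _ ≤ ‖f‖ * ‖u‖ := f.le_opNorm u
      _ = ‖f‖ := by rw [hc1, mul_one]
  -- construct a minimal-norm interpolant via Hahn-Banach
  obtain ⟨g, hg, hgnorm⟩ : ∃ g : P →L[ℝ] ℝ, (∀ j, g (ν j) = y j) ∧ ‖g‖ = S := by
    set V : Submodule ℝ P := Submodule.span ℝ (Set.range ν) with hV
    haveI : FiniteDimensional ℝ V := FiniteDimensional.span_of_finite ℝ (Set.finite_range ν)
    set b : Module.Basis (Fin n) ℝ V := Module.Basis.span hν with hb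
    set L₀ : V →ₗ[ℝ] ℝ := b.constr ℝ y with hL₀
    set L : V →L[ℝ] ℝ := LinearMap.toContinuousLinearMap L₀ with hL
    set νV : Fin n → V := fun i => ⟨ν i, Submodule.subset_span (Set.mem_range_self i)⟩ with hνV
    have hbν : ∀ i, b i = νV i := fun i => Module.Basis.span_apply hν i
    have hLν : ∀ i, L (νV i) = y i := by
      intro i
      rw [← hbν i]
      exact Module.Basis.constr_basis b ℝ y i
    have hLval : ∀ (d : Fin n → ℝ), L (∑ i, d i • νV i) = ∑ i, d i * y i := by
      intro d
      rw [map_sum]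
      exact Finset.sum_congr rfl fun i _ => by rw [map_smul, hLν i, smul_eq_mul]
    have hLle : ‖L‖ ≤ S := by
      refine L.opNorm_le_bound hSpos.le fun x => ?_
      obtain ⟨d, hd⟩ := Submodule.mem_span_range_iff_exists_fun ℝ |>.mp x.2
      have hx : x = ∑ i, d i • νV i := by
        apply Subtype.ext
        rw [← hd]
        push_cast [hνV]
        rfl
      have hnx : ‖x‖ = ‖∑ i, d i • ν i‖ := by rw [hd]; rfl
      rw [hx, hLval d, ← hx, hnx, Real.norm_eq_abs, abs_le]
      have h1 := key d
      have h2 := key (fun i => -(d i))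
      simp only [neg_smul, neg_mul, Finset.sum_neg_distrib, norm_neg] at h2
      constructor
      · linarith
      · linarith
    obtain ⟨g, hgx, hgn⟩ := exists_extension_norm_eq V L
    refine ⟨g, fun j => ?_, ?_⟩
    · have := hgx (νV j)
      rw [hLν j] at this
      simpa [hνV] using this
    · refine le_antisymm (hgn ▸ hLle) (hlb g fun j => ?_)
      have := hgx (νV j)
      rw [hLν j] at this
      simpa [hνV] using this
  intro m₀ ν' hm₀ hν'
  -- m₀ = S
  have hm : m₀ = S := by
    rw [hm₀]
    apply le_antisymm
    · refine csInf_le ⟨S, ?_⟩ ⟨g, hg, hgnorm.symm⟩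
      rintro r ⟨f, hf, rfl⟩
      exact hlb f hf
    · refine le_csInf ⟨‖g‖, g, hg, rfl⟩ ?_
      rintro r ⟨f, hf, rfl⟩
      exact hlb f hf
  rw [hν', hm]
  have hwnorm : ‖S • u‖ = S := by
    rw [norm_smul, hc1, mul_one, Real.norm_eq_abs, abs_of_pos hSpos]
  have hwne : S • u ≠ 0 := by
    intro h; rw [h, norm_zero] at hwnorm; exact hSpos.ne hwnorm
  have hsub : subdiffDualNorm (S • u) = {w : P →L[ℝ] ℝ | ‖w‖ = 1 ∧ w (S • u) = ‖S • u‖} :=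
    if_neg hwne
  have main : ∀ f : P →L[ℝ] ℝ, (∀ j, f (ν j) = y j) →
      (∀ g' : P →L[ℝ] ℝ, (∀ j, g' (ν j) = y j) → ‖f‖ ≤ ‖g'‖) →
      f ∈ ‖S • u‖ • subdiffDualNorm (S • u) := by
    intro f hf hmin
    have hfS : ‖f‖ = S := le_antisymm (hgnorm ▸ hmin g hg) (hlb f hf)
    have hfu : f u = S := by
      rw [hu, map_sum, hS]
      exact Finset.sum_congr rfl fun i _ => by rw [map_smul, hf i, smul_eq_mul]
    rw [hsub, hwnorm]
    refine Set.mem_smul_set.mpr ⟨S⁻¹ • f, ⟨?_, ?_⟩, ?_⟩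
    · have h := norm_smul (S⁻¹) f
      rw [h, hfS, Real.norm_eq_abs, abs_inv, abs_of_pos hSpos, inv_mul_cancel₀ hSpos.ne']
    · show (S⁻¹ • f) (S • u) = S
      rw [ContinuousLinearMap.smul_apply, map_smul, hfu, smul_eq_mul, smul_eq_mul]
      field_simp
    · rw [smul_smul, mul_inv_cancel₀ hSpos.ne', one_smul]
  exact ⟨main, g, main g hg (fun g' hg' => hgnorm ▸ hlb g' hg'), hg⟩
end

section
/- For every nonzero v ∈ c₀(ℕ), the set of extreme points of the subdifferential ∂‖·‖_∞(v) ⊆ ℓ¹(ℕ) equals exactly { sign(v_j) e_j : |v_j| = ‖v‖_∞ }. -/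
private lemma sgn_mul_abs (r : ℝ) (h : r ≠ 0) : Real.sign r * |r| = r := by
  rcases h.lt_or_gt with h|h
  · rw [Real.sign_of_neg h, abs_of_neg h]; ring
  · rw [Real.sign_of_pos h, abs_of_pos h]; ring

private lemma sgn_mul_self (r : ℝ) (h : r ≠ 0) : Real.sign r * r = |r| := by
  nth_rewrite 2 [← sgn_mul_abs r h]
  rcases Real.sign_apply_eq_of_ne_zero r h with h'|h' <;> rw [h'] <;> ring

private lemma abs_sgn (r : ℝ) (h : r ≠ 0) : |Real.sign r| = 1 := by
  rcases Real.sign_apply_eq_of_ne_zero r h with h'|h' <;> rw [h'] <;> norm_num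

private lemma sgn_sq (r : ℝ) (h : r ≠ 0) : Real.sign r * Real.sign r = 1 := by
  rcases Real.sign_apply_eq_of_ne_zero r h with h'|h' <;> rw [h'] <;> norm_num

/-- For a nonzero `v ∈ c₀(ℕ)`, the set of extreme points of the
subdifferential of the supremum norm at `v`, viewed inside `ℓ¹(ℕ) = c₀(ℕ)*`,
equals exactly `{sign(v_j) e_j : |v_j| = ‖v‖_∞}`. -/
theorem stmt_14 (v : ℕ → ℝ) (hv : Filter.Tendsto v Filter.atTop (nhds 0))
    (hv0 : v ≠ 0) :
    ({x : ℕ → ℝ | Summable (fun j => |x j|) ∧ (∑' j, |x j|) = 1 ∧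
        (∑' j, x j * v j) = ⨆ i, |v i|}.extremePoints ℝ) =
      {x : ℕ → ℝ | ∃ j : ℕ, |v j| = (⨆ i, |v i|) ∧
        x = Real.sign (v j) • (Pi.single j 1 : ℕ → ℝ)} := by
  set M : ℝ := ⨆ i, |v i| with hMdef
  set S : Set (ℕ → ℝ) := {x : ℕ → ℝ | Summable (fun j => |x j|) ∧ (∑' j, |x j|) = 1 ∧
        (∑' j, x j * v j) = M} with hSdef
  have hvabs : Filter.Tendsto (fun i => |v i|) Filter.atTop (nhds 0) := by
    simpa using hv.abs
  have hbdd : BddAbove (Set.range fun i => |v i|) := hvabs.bddAbove_range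
  have hleM : ∀ i, |v i| ≤ M := fun i => le_ciSup hbdd i
  have hM0 : 0 < M := by
    obtain ⟨j, hj⟩ : ∃ j, v j ≠ 0 := by
      by_contra h; push_neg at h; exact hv0 (funext h)
    exact lt_of_lt_of_le (abs_pos.mpr hj) (hleM j)
  -- key: membership in S forces the sign/support structure
  have hsum_mul : ∀ (x : ℕ → ℝ), Summable (fun j => |x j|) →
      Summable (fun j => x j * v j) := by
    intro x hx
    apply Summable.of_abs
    apply Summable.of_nonneg_of_le (fun j => abs_nonneg _) (fun j => ?_) (hx.mul_left M)
    calc |x j * v j| = |x j| * |v j| := abs_mul _ _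
      _ ≤ |x j| * M := mul_le_mul_of_nonneg_left (hleM j) (abs_nonneg _)
      _ = M * |x j| := mul_comm _ _
  have stepA : ∀ x ∈ S, ∀ j, x j * v j = M * |x j| := by
    rintro x ⟨hx1, hx2, hx3⟩ j
    have hxv := hsum_mul x hx1
    have hg : Summable (fun i => M * |x i| - x i * v i) := (hx1.mul_left M).sub hxv
    have hgnn : ∀ i, 0 ≤ M * |x i| - x i * v i := by
      intro i
      have h1 : x i * v i ≤ |x i| * |v i| := (le_abs_self _).trans (abs_mul _ _).le
      nlinarith [hleM i, abs_nonneg (x i)]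
    have hgsum : (∑' i, (M * |x i| - x i * v i)) = 0 := by
      rw [Summable.tsum_sub (hx1.mul_left M) hxv, tsum_mul_left, hx2, hx3]; ring
    have h2 : M * |x j| - x j * v j ≤ 0 := hgsum ▸ Summable.le_tsum hg j (fun i _ => hgnn i)
    linarith [hgnn j]
  have stepB : ∀ x ∈ S, ∀ k, x k ≠ 0 → |v k| = M ∧ x k = Real.sign (v k) * |x k| := by
    intro x hxS k hk
    have h1 := stepA x hxS k
    have h2 : x k * v k ≤ |x k| * |v k| := (le_abs_self _).trans (abs_mul _ _).le
    have habs : 0 < |x k| := abs_pos.mpr hk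
    have hvk : |v k| = M := le_antisymm (hleM k) (by nlinarith)
    have hvk0 : v k ≠ 0 := by
      intro h; rw [h, abs_zero] at hvk; linarith
    refine ⟨hvk, ?_⟩
    have h3 : v k = Real.sign (v k) * M := by rw [← hvk, sgn_mul_abs _ hvk0]
    have h4 : x k * Real.sign (v k) = |x k| := by
      have h5 := h1
      rw [h3] at h5
      apply mul_left_cancel₀ (ne_of_gt hM0)
      calc M * (x k * Real.sign (v k)) = x k * (Real.sign (v k) * M) := by ring
        _ = M * |x k| := h5
    calc x k = x k * 1 := by ring
      _ = x k * (Real.sign (v k) * Real.sign (v k)) := by rw [sgn_sq _ hvk0]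
      _ = (x k * Real.sign (v k)) * Real.sign (v k) := by ring
      _ = Real.sign (v k) * |x k| := by rw [h4]; ring
  ext w
  simp only [Set.mem_setOf_eq]
  constructor
  · rintro ⟨hwS, hwext⟩
    obtain ⟨hw1, hw2, hw3⟩ := hwS
    obtain ⟨j, hj⟩ : ∃ j, w j ≠ 0 := by
      by_contra h; push_neg at h
      have : (∑' j, |w j|) = 0 := by simp [h]
      rw [this] at hw2; norm_num at hw2
    have hBj := stepB w ⟨hw1, hw2, hw3⟩ j hj
    refine ⟨j, hBj.1, ?_⟩
    have hvj0 : v j ≠ 0 := by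
      intro h; rw [h, abs_zero] at hBj; linarith [hBj.1]
    -- all other coordinates vanish
    have hother : ∀ k, k ≠ j → w k = 0 := by
      intro k hkj
      by_contra hk
      have hBk := stepB w ⟨hw1, hw2, hw3⟩ k hk
      have hvk0 : v k ≠ 0 := by
        intro h; rw [h, abs_zero] at hBk; linarith [hBk.1]
      set t : ℝ := min |w j| |w k| with htdef
      have ht : 0 < t := lt_min (abs_pos.mpr hj) (abs_pos.mpr hk)
      have htj : t ≤ |w j| := min_le_left _ _
      have htk : t ≤ |w k| := min_le_right _ _
      set σj := Real.sign (v j) with hσj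
      set σk := Real.sign (v k) with hσk
      have key : ∀ s : ℝ, |s| = 1 →
          (fun m => w m + s * (if m = j then t * σj else if m = k then -(t * σk) else 0)) ∈ S := by
        intro s hs
        set d : ℕ → ℝ := fun m => s * (if m = j then t * σj else if m = k then -(t * σk) else 0)
          with hd
        have hd0 : ∀ m ∉ ({j, k} : Finset ℕ), d m = 0 := by
          intro m hm
          simp only [Finset.mem_insert, Finset.mem_singleton, not_or] at hm
          simp [hd, hm.1, hm.2]
        have hdsum : Summable d := summable_of_ne_finset_zero hd0
        have hdabs : Summable (fun m => |d m|) := summable_of_ne_finset_zero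
          (fun m hm => by rw [hd0 m hm, abs_zero])
        -- values at j and k
        have hdj : d j = s * (t * σj) := by simp [hd]
        have hdk : d k = s * (-(t * σk)) := by simp [hd, hkj]
        have hxj : w j + d j = σj * (|w j| + s * t) := by
          rw [hdj]; linear_combination hBj.2
        have hxk : w k + d k = σk * (|w k| - s * t) := by
          rw [hdk]; linear_combination hBk.2
        have hst : |s * t| = t := by rw [abs_mul, hs, abs_of_pos ht, one_mul]
        have hst2 : s * t ≤ t := (le_abs_self _).trans hst.le
        have hst3 : -t ≤ s * t := neg_le_of_abs_le hst.le
        have haj : |w j + d j| = |w j| + s * t := by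
          rw [hxj, abs_mul, abs_sgn _ hvj0, one_mul, abs_of_nonneg (by linarith)]
        have hak : |w k + d k| = |w k| - s * t := by
          rw [hxk, abs_mul, abs_sgn _ hvk0, one_mul, abs_of_nonneg (by linarith)]
        have hsum1 : Summable (fun m => |w m + d m|) := by
          apply Summable.of_nonneg_of_le (fun m => abs_nonneg _) (fun m => abs_add_le _ _)
            (hw1.add hdabs)
        refine ⟨hsum1, ?_, ?_⟩
        · -- tsum of abs = 1
          have he : ∀ m ∉ ({j, k} : Finset ℕ), |w m + d m| - |w m| = 0 := by
            intro m hm; rw [hd0 m hm]; simp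
          have hesum : Summable (fun m => |w m + d m| - |w m|) := hsum1.sub hw1
          have h1 : (∑' m, (|w m + d m| - |w m|)) = 0 := by
            rw [tsum_eq_sum he, Finset.sum_pair (Ne.symm hkj), haj, hak]
            ring
          have h2 := Summable.tsum_sub hsum1 hw1
          rw [h1] at h2
          show (∑' m, |w m + d m|) = 1
          linarith [hw2]
        · -- tsum x v = M
          have he : ∀ m ∉ ({j, k} : Finset ℕ), d m * v m = 0 := by
            intro m hm; rw [hd0 m hm, zero_mul]
          have hdv : Summable (fun m => d m * v m) := summable_of_ne_finset_zero he
          have h1 : (∑' m, d m * v m) = 0 := by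
            rw [tsum_eq_sum he, Finset.sum_pair (Ne.symm hkj), hdj, hdk]
            have e1 : σj * v j = |v j| := sgn_mul_self _ hvj0
            have e2 : σk * v k = |v k| := sgn_mul_self _ hvk0
            rw [hBj.1] at e1
            rw [hBk.1] at e2
            linear_combination s * t * e1 - s * t * e2
          have h2 : (∑' m, (w m + d m) * v m) = (∑' m, w m * v m) + ∑' m, d m * v m := by
            rw [← Summable.tsum_add (hsum_mul w hw1) hdv]
            congr 1; funext m; ring
          show (∑' m, (w m + d m) * v m) = M
          rw [h2, h1, hw3]; ring
      -- build the two points and contradict extremality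
      have hx := key 1 (by norm_num)
      have hy := key (-1) (by norm_num)
      have hseg : w ∈ openSegment ℝ
          (fun m => w m + 1 * (if m = j then t * σj else if m = k then -(t * σk) else 0))
          (fun m => w m + (-1) * (if m = j then t * σj else if m = k then -(t * σk) else 0)) := by
        refine ⟨1/2, 1/2, by norm_num, by norm_num, by norm_num, ?_⟩
        funext m
        simp only [Pi.add_apply, Pi.smul_apply, smul_eq_mul]
        ring
      have hxw := hwext hx hy hseg
      have h6 : w j + 1 * (t * σj) = w j := by simpa using congr_fun hxw j
      have hσj0 : σj ≠ 0 := fun h => hvj0 (Real.sign_eq_zero_iff.mp h)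
      have h7 : t * σj = 0 := by linarith
      rcases mul_eq_zero.mp h7 with h|h
      · exact absurd h (ne_of_gt ht)
      · exact hσj0 h
    -- conclude w = sign(v j) • single j 1
    have hwj1 : |w j| = 1 := by
      have : (∑' k, |w k|) = |w j| :=
        tsum_eq_single j (fun k hk => by rw [hother k hk, abs_zero])
      rw [this] at hw2; exact hw2
    funext k
    rcases eq_or_ne k j with rfl|hk
    · simp only [Pi.smul_apply, Pi.single_eq_same, smul_eq_mul, mul_one]
      rw [hBj.2, hwj1, mul_one]
    · simp only [Pi.smul_apply, Pi.single_eq_of_ne hk, smul_eq_mul, mul_zero]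
      exact hother k hk
  · rintro ⟨j, hj, rfl⟩
    have hvj0 : v j ≠ 0 := by
      intro h; rw [h, abs_zero] at hj; linarith
    set σ := Real.sign (v j) with hσ
    have hσ1 : |σ| = 1 := abs_sgn _ hvj0
    have hw0 : ∀ m, m ≠ j → (σ • (Pi.single j 1 : ℕ → ℝ)) m = 0 := by
      intro m hm
      simp [Pi.single_eq_of_ne hm]
    have hwj : (σ • (Pi.single j 1 : ℕ → ℝ)) j = σ := by simp
    have hwS : (σ • (Pi.single j 1 : ℕ → ℝ)) ∈ S := by
      refine ⟨summable_of_ne_finset_zero (s := {j})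
        (fun m hm => by rw [hw0 m (by simpa using hm), abs_zero]), ?_, ?_⟩
      · rw [tsum_eq_single j (fun m hm => by rw [hw0 m hm, abs_zero]), hwj, hσ1]
      · rw [tsum_eq_single j (fun m hm => by rw [hw0 m hm, zero_mul]), hwj]
        exact (sgn_mul_self _ hvj0).trans hj
    refine ⟨hwS, ?_⟩
    rintro x hxS y hyS ⟨a, b, ha, hb, hab, habxy⟩
    have key2 : ∀ z, z ∈ S → σ * z j = 1 → z = σ • (Pi.single j 1 : ℕ → ℝ) := by
      rintro z ⟨hz1, hz2, -⟩ hzj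
      have hzj1 : |z j| = 1 := by
        have : |σ * z j| = 1 := by rw [hzj, abs_one]
        rwa [abs_mul, hσ1, one_mul] at this
      funext m
      rcases eq_or_ne m j with rfl|hm
      · rw [hwj]
        have := sgn_sq _ hvj0
        calc z m = (σ * σ) * z m := by rw [this]; ring
          _ = σ * (σ * z m) := by ring
          _ = σ := by rw [hzj, mul_one]
      · rw [hw0 m hm]
        have hle : |z j| + |z m| ≤ 1 := by
          have := Summable.sum_le_tsum ({j, m} : Finset ℕ) (fun i _ => abs_nonneg _) hz1
          rwa [Finset.sum_pair (Ne.symm hm), hz2] at this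
        have : |z m| ≤ 0 := by linarith
        exact abs_eq_zero.mp (le_antisymm this (abs_nonneg _))
    have hxle : σ * x j ≤ 1 := by
      have h1 : σ * x j ≤ |σ * x j| := le_abs_self _
      have h2 : |σ * x j| = |x j| := by rw [abs_mul, hσ1, one_mul]
      have h3 : |x j| ≤ 1 := by
        have := Summable.le_tsum hxS.1 j (fun i _ => abs_nonneg _)
        rwa [hxS.2.1] at this
      linarith
    have hyle : σ * y j ≤ 1 := by
      have h1 : σ * y j ≤ |σ * y j| := le_abs_self _
      have h2 : |σ * y j| = |y j| := by rw [abs_mul, hσ1, one_mul]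
      have h3 : |y j| ≤ 1 := by
        have := Summable.le_tsum hyS.1 j (fun i _ => abs_nonneg _)
        rwa [hyS.2.1] at this
      linarith
    have hcoord : a * (σ * x j) + b * (σ * y j) = 1 := by
      have := congr_fun habxy j
      simp only [Pi.add_apply, Pi.smul_apply, smul_eq_mul, Pi.single_eq_same, mul_one] at this
      have hσσ := sgn_sq _ hvj0
      calc a * (σ * x j) + b * (σ * y j) = σ * (a * x j + b * y j) := by ring
        _ = σ * σ := by rw [this]
        _ = 1 := hσσ
    have hxj : σ * x j = 1 := by nlinarith
    have hyj : σ * y j = 1 := by nlinarith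
    exact key2 x hxS hxj
end

section
/- Let 1 < p,q < ∞ with 1/p + 1/q = 1, let v_1,…,v_n be linearly independent elements of ℓ^q(ℕ) viewed as functionals on ℓ^p(ℕ), and let y ∈ ℝⁿ \ {0}. If the unique minimizer x̂ of ‖x‖_p subject to ⟨v_j, x⟩ = y_j (j = 1,…,n) is supported in {1,…,N} for some N, then the truncated sequences T_N(v_j) := (v_{j,N+k})_{k∈ℕ}, j = 1,…,n, are linearly dependent in ℓ^q(ℕ). -/
/-- In `ℓ^p(ℕ)` (`1 < p < ∞`), if the unique minimum norm interpolant `x̂`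
with respect to linearly independent functionals `v₁,…,vₙ ∈ ℓ^q(ℕ)` is
supported on the first `N` coordinates, then the truncated sequences
`T_N(v_j) = (v_j(N+k))_k` are linearly dependent. -/
theorem stmt_16 (p q : ℝ) (hp : 1 < p) (hq : 1 < q) (hpq : 1 / p + 1 / q = 1)
    {n : ℕ} (v : Fin n → ℕ → ℝ) (hvq : ∀ j, Summable fun k => |v j k| ^ q)
    (hvli : LinearIndependent ℝ v)
    (y : Fin n → ℝ) (hy : y ≠ 0)
    (x : ℕ → ℝ) (hxp : Summable fun k => |x k| ^ p)
    (hxM : ∀ j, (∑' k, v j k * x k) = y j)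
    (hxmin : ∀ z : ℕ → ℝ, Summable (fun k => |z k| ^ p) →
      (∀ j, (∑' k, v j k * z k) = y j) →
      (∑' k, |x k| ^ p) ^ (1 / p) ≤ (∑' k, |z k| ^ p) ^ (1 / p))
    (hxuniq : ∀ z : ℕ → ℝ, Summable (fun k => |z k| ^ p) →
      (∀ j, (∑' k, v j k * z k) = y j) →
      (∑' k, |z k| ^ p) ^ (1 / p) = (∑' k, |x k| ^ p) ^ (1 / p) → z = x)
    (N : ℕ) (hsupp : ∀ k, N ≤ k → x k = 0) :
    ¬ LinearIndependent ℝ (fun j : Fin n => fun k : ℕ => v j (N + k)) := by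
  have hp0 : (0:ℝ) < p := lt_trans one_pos hp
  -- the dual certificate
  set u : ℕ → ℝ := fun k => |x k| ^ (p - 2) * x k with hu
  -- functionals on finitely supported sequences
  set f : Fin n → (ℕ →₀ ℝ) →ₗ[ℝ] ℝ :=
    fun j => Finsupp.linearCombination ℝ (v j) with hf
  set g : (ℕ →₀ ℝ) →ₗ[ℝ] ℝ := Finsupp.linearCombination ℝ u with hg
  -- key: g vanishes on ⋂ ker (f j)
  have key : ⨅ j, LinearMap.ker (f j) ≤ LinearMap.ker g := by
    intro w hw
    simp only [Submodule.mem_iInf, LinearMap.mem_ker] at hw ⊢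
    -- the finite window
    set S : Finset ℕ := Finset.range N ∪ w.support with hS
    have hxS : ∀ k ∉ S, x k = 0 := by
      intro k hk
      exact hsupp k (by
        by_contra h
        exact hk (Finset.mem_union_left _ (Finset.mem_range.2 (lt_of_not_ge h))))
    have hwS : ∀ k ∉ S, w k = 0 := by
      intro k hk
      by_contra h
      exact hk (Finset.mem_union_right _ (Finsupp.mem_support_iff.2 h))
    -- perturbed sequences
    set z : ℝ → ℕ → ℝ := fun t k => x k + t * w k with hz
    have hz0 : ∀ t, ∀ k ∉ S, z t k = 0 := by
      intro t k hk; simp [hz, hxS k hk, hwS k hk]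
    have hzsum : ∀ t, Summable fun k => |z t k| ^ p := by
      intro t
      refine summable_of_ne_finset_zero (s := S) ?_
      intro k hk
      simp [hz0 t k hk, Real.zero_rpow (ne_of_gt hp0)]
    -- constraints hold for z t
    have hfw : ∀ j, ∑ k ∈ S, v j k * w k = 0 := by
      intro j
      have := hw j
      rw [hf] at this
      simp only [Finsupp.linearCombination_apply, Finsupp.sum] at this
      simp only [smul_eq_mul] at this
      have hext : ∑ k ∈ S, w k * v j k = ∑ k ∈ w.support, w k * v j k :=
        (Finset.sum_subset Finset.subset_union_right
          (fun k _ hk => by simp [Finsupp.notMem_support_iff.1 hk])).symm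
      calc ∑ k ∈ S, v j k * w k = ∑ k ∈ S, w k * v j k :=
            Finset.sum_congr rfl (fun k _ => mul_comm _ _)
        _ = 0 := hext.trans this
    have hvx : ∀ j, ∑ k ∈ S, v j k * x k = y j := by
      intro j
      rw [← hxM j]
      exact (tsum_eq_sum (fun k hk => by simp [hxS k hk])).symm
    have hzcon : ∀ t j, (∑' k, v j k * z t k) = y j := by
      intro t j
      rw [tsum_eq_sum (s := S) (fun k hk => by simp [hz0 t k hk])]
      have : ∑ k ∈ S, v j k * z t k
          = ∑ k ∈ S, v j k * x k + t * ∑ k ∈ S, v j k * w k := by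
        rw [Finset.mul_sum, ← Finset.sum_add_distrib]
        exact Finset.sum_congr rfl (fun k _ => by simp [hz]; ring)
      rw [this, hvx j, hfw j, mul_zero, add_zero]
    -- the finite objective
    set G : ℝ → ℝ := fun t => ∑ k ∈ S, |z t k| ^ p with hG
    have hGt : ∀ t, (∑' k, |z t k| ^ p) = G t := by
      intro t
      exact tsum_eq_sum (fun k hk => by
        simp [hz0 t k hk, Real.zero_rpow (ne_of_gt hp0)])
    have hG0 : (∑' k, |x k| ^ p) = G 0 := by
      have := hGt 0
      simpa [hz] using this
    -- minimality : G 0 ≤ G t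
    have hmin : ∀ t, G 0 ≤ G t := by
      intro t
      have h1 := hxmin (z t) (hzsum t) (hzcon t)
      have hA : (0:ℝ) ≤ ∑' k, |x k| ^ p :=
        tsum_nonneg (fun k => Real.rpow_nonneg (abs_nonneg _) _)
      have hB : (0:ℝ) ≤ ∑' k, |z t k| ^ p :=
        tsum_nonneg (fun k => Real.rpow_nonneg (abs_nonneg _) _)
      have := (Real.rpow_le_rpow_iff hA hB (by positivity : (0:ℝ) < 1/p)).1 h1
      rwa [hG0, hGt t] at this
    have hloc : IsLocalMin G 0 := Filter.Eventually.of_forall hmin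
    -- derivative of G at 0
    have hder : HasDerivAt G (∑ k ∈ S, p * |x k| ^ (p - 2) * x k * w k) 0 := by
      refine HasDerivAt.fun_sum (fun k _ => ?_)
      have h1 : HasDerivAt (fun t : ℝ => x k + t * w k) (w k) 0 := by
        simpa using ((hasDerivAt_id (0:ℝ)).mul_const (w k)).const_add (x k)
      have h2 : HasDerivAt ((fun s : ℝ => |s| ^ p) ∘ (fun t : ℝ => x k + t * w k))
          ((p * |x k| ^ (p - 2) * x k) * w k) 0 := by
        apply HasDerivAt.comp
        · show HasDerivAt (fun s : ℝ => |s| ^ p) _ (x k + (0:ℝ) * w k)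
          simpa using hasDerivAt_abs_rpow (x k) hp
        · exact h1
      exact h2
    have hzero := hloc.hasDerivAt_eq_zero hder
    -- conclude g w = 0
    have hsum0 : ∑ k ∈ S, u k * w k = 0 := by
      have : p * ∑ k ∈ S, u k * w k = 0 := by
        rw [Finset.mul_sum, ← hzero]
        exact Finset.sum_congr rfl (fun k _ => by simp [hu]; ring)
      exact (mul_eq_zero.1 this).resolve_left (ne_of_gt hp0)
    rw [hg]
    simp only [Finsupp.linearCombination_apply, Finsupp.sum, smul_eq_mul]
    have hext : ∑ k ∈ S, w k * u k = ∑ k ∈ w.support, w k * u k :=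
      (Finset.sum_subset Finset.subset_union_right
        (fun k _ hk => by simp [Finsupp.notMem_support_iff.1 hk])).symm
    rw [← hext, ← hsum0]
    exact Finset.sum_congr rfl (fun k _ => mul_comm _ _)
  -- get coefficients
  obtain ⟨a, ha⟩ := (Submodule.mem_span_range_iff_exists_fun ℝ).1 (mem_span_of_iInf_ker_le_ker key)
  have hak : ∀ k, ∑ j, a j * v j k = u k := by
    intro k
    have := congrArg (fun φ : (ℕ →₀ ℝ) →ₗ[ℝ] ℝ => φ (Finsupp.single k 1)) ha
    simpa [hf, hg, Finsupp.linearCombination_single] using this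
  -- a ≠ 0
  have hx0 : x ≠ 0 := by
    intro h
    apply hy
    funext j
    rw [← hxM j, h]
    simp
  have ha0 : a ≠ 0 := by
    intro h
    apply hx0
    funext k
    have := hak k
    rw [h] at this
    simp only [Pi.zero_apply, zero_mul, Finset.sum_const_zero] at this
    by_contra hxk
    have habs : (0:ℝ) < |x k| ^ (p - 2) := Real.rpow_pos_of_pos (abs_pos.2 hxk) _
    have : |x k| ^ (p - 2) * x k ≠ 0 := mul_ne_zero (ne_of_gt habs) hxk
    exact this (by rw [hu] at *; exact (Eq.symm ‹(0:ℝ) = |x k| ^ (p-2) * x k›))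
  -- tails are dependent
  intro hli
  apply ha0
  funext j
  refine Fintype.linearIndependent_iff.1 hli a ?_ j
  funext k
  have h1 := hak (N + k)
  have h2 : u (N + k) = 0 := by
    simp [hu, hsupp (N + k) (Nat.le_add_right N k)]
  simp only [Finset.sum_apply, Pi.smul_apply, smul_eq_mul, Pi.zero_apply]
  exact h1.trans h2
end

section
/- Let X' be a locally compact Hausdorff space and let g ∈ C₀(X') be nonzero. Then the set of extreme points of ∂‖·‖_∞(g) ⊆ M(X') = C₀(X')* equals { sign(g(x')) δ_{x'} : x' ∈ X', |g(x')| = ‖g‖_∞ }. -/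
open MeasureTheory

/-- The integral of a real function against a (real) signed measure, via its
Jordan decomposition. -/
noncomputable def signedIntegral {X' : Type*} [MeasurableSpace X']
    (μ : SignedMeasure X') (g : X' → ℝ) : ℝ :=
  (∫ x', g x' ∂μ.toJordanDecomposition.posPart) -
    (∫ x', g x' ∂μ.toJordanDecomposition.negPart)

section Aux

set_option linter.unusedVariables false
set_option linter.unusedSectionVars false

variable {α : Type*} [MeasurableSpace α]


lemma toJD_toSignedMeasure (ν : Measure α) [IsFiniteMeasure ν] :
    ν.toSignedMeasure.toJordanDecomposition =
      ⟨ν, 0, Measure.MutuallySingular.zero_right⟩ := by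
  apply JordanDecomposition.toSignedMeasure_injective
  rw [SignedMeasure.toSignedMeasure_toJordanDecomposition]
  show ν.toSignedMeasure = ν.toSignedMeasure - (0 : Measure α).toSignedMeasure
  rw [Measure.toSignedMeasure_zero, sub_zero]

lemma posPart_toSigned (ν : Measure α) [IsFiniteMeasure ν] :
    ν.toSignedMeasure.toJordanDecomposition.posPart = ν := by
  rw [toJD_toSignedMeasure]

lemma negPart_toSigned (ν : Measure α) [IsFiniteMeasure ν] :
    ν.toSignedMeasure.toJordanDecomposition.negPart = 0 := by
  rw [toJD_toSignedMeasure]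

lemma totalVariation_toSigned (ν : Measure α) [IsFiniteMeasure ν] :
    ν.toSignedMeasure.totalVariation = ν := by
  rw [SignedMeasure.totalVariation, posPart_toSigned, negPart_toSigned, add_zero]

lemma totalVariation_neg_toSigned (ν : Measure α) [IsFiniteMeasure ν] :
    (-ν.toSignedMeasure).totalVariation = ν := by
  rw [SignedMeasure.totalVariation_neg, totalVariation_toSigned]

lemma signedIntegral_toSigned (ν : Measure α) [IsFiniteMeasure ν] (g : α → ℝ) :
    signedIntegral ν.toSignedMeasure g = ∫ x, g x ∂ν := by
  rw [signedIntegral, posPart_toSigned, negPart_toSigned, integral_zero_measure, sub_zero]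

lemma signedIntegral_neg_toSigned (ν : Measure α) [IsFiniteMeasure ν] (g : α → ℝ) :
    signedIntegral (-ν.toSignedMeasure) g = -∫ x, g x ∂ν := by
  rw [signedIntegral, SignedMeasure.toJordanDecomposition_neg,
    JordanDecomposition.neg_posPart, JordanDecomposition.neg_negPart,
    posPart_toSigned, negPart_toSigned, integral_zero_measure, zero_sub]

instance tv_finite (s : SignedMeasure α) : IsFiniteMeasure s.totalVariation := by
  unfold SignedMeasure.totalVariation; infer_instance

lemma restrict_eq_of_null (p n : Measure α) {S : Set α} (hS : MeasurableSet S)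
    (h1 : p S = 0) (h2 : n Sᶜ = 0) : p = (p + n).restrict Sᶜ := by
  ext B hB
  rw [Measure.restrict_apply hB, Measure.add_apply]
  have hn : n (B ∩ Sᶜ) = 0 := measure_mono_null Set.inter_subset_right h2
  have hpB : p (B ∩ S) = 0 := measure_mono_null Set.inter_subset_right h1
  have h3 := measure_inter_add_diff (μ := p) B hS
  rw [hn, add_zero, ← Set.diff_eq]
  rw [hpB, zero_add] at h3
  exact h3.symm

lemma parts_regular [TopologicalSpace α] [T2Space α] [BorelSpace α]
    (s : SignedMeasure α) (h : s.totalVariation.Regular) :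
    s.toJordanDecomposition.posPart.Regular ∧ s.toJordanDecomposition.negPart.Regular := by
  haveI := h
  obtain ⟨S, hS, h1, h2⟩ := s.toJordanDecomposition.mutuallySingular
  constructor
  · rw [show s.toJordanDecomposition.posPart =
        s.totalVariation.restrict Sᶜ from
      restrict_eq_of_null _ _ hS h1 h2]
    exact Measure.Regular.restrict_of_measure_ne_top (measure_ne_top _ _)
  · have : s.toJordanDecomposition.negPart = s.totalVariation.restrict (Sᶜ)ᶜ := by
      have := restrict_eq_of_null s.toJordanDecomposition.negPart
        s.toJordanDecomposition.posPart hS.compl h2 (by simpa using h1)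
      rwa [show s.toJordanDecomposition.negPart + s.toJordanDecomposition.posPart
          = s.totalVariation from add_comm _ _] at this
    rw [this]
    exact Measure.Regular.restrict_of_measure_ne_top (measure_ne_top _ _)
variable {α : Type*} [MeasurableSpace α]

lemma dirac_regular [TopologicalSpace α] [T1Space α] [OpensMeasurableSpace α] (x : α) :
    (Measure.dirac x).Regular := by
  haveI : (Measure.dirac x).OuterRegular := by
    constructor
    intro A hA r hr
    by_cases hx : x ∈ A
    · exact ⟨Set.univ, Set.subset_univ _, isOpen_univ, by
        calc Measure.dirac x Set.univ = Measure.dirac x A := by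
              rw [Measure.dirac_apply_of_mem hx, measure_univ]
          _ < r := hr⟩
    · refine ⟨{x}ᶜ, Set.subset_compl_singleton_iff.2 hx, isOpen_compl_singleton, ?_⟩
      calc Measure.dirac x {x}ᶜ = 0 := by
            rw [Measure.dirac_apply' _ (MeasurableSet.singleton x).compl]; simp
        _ ≤ Measure.dirac x A := zero_le
        _ < r := hr
  constructor
  intro U hU r hr
  by_cases hx : x ∈ U
  · refine ⟨{x}, Set.singleton_subset_iff.2 hx, isCompact_singleton, ?_⟩
    rwa [Measure.dirac_apply_of_mem (Set.mem_singleton x), ← Measure.dirac_apply_of_mem hx]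
  · refine ⟨∅, Set.empty_subset _, isCompact_empty, ?_⟩
    have h0 : Measure.dirac x U = 0 := by
      rw [Measure.dirac_apply' _ hU.measurableSet]; simp [hx]
    rw [h0] at hr
    exact absurd hr (by simp)

lemma eq_dirac_of [MeasurableSingletonClass α] (p : Measure α) {x : α}
    (h1 : p {x}ᶜ = 0) (h2 : p {x} = 1) : p = Measure.dirac x := by
  ext A hA
  have hsplit := measure_inter_add_diff (μ := p) A (MeasurableSet.singleton x)
  have hdiff : p (A \ {x}) = 0 := measure_mono_null (Set.diff_subset_compl A {x}) h1
  rw [hdiff, add_zero] at hsplit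
  by_cases hx : x ∈ A
  · rw [Set.inter_eq_self_of_subset_right (Set.singleton_subset_iff.2 hx)] at hsplit
    rw [← hsplit, h2, Measure.dirac_apply' _ hA]
    simp [hx]
  · have : A ∩ {x} = ∅ := by
      ext y; simp only [Set.mem_inter_iff, Set.mem_singleton_iff, Set.mem_empty_iff_false,
        iff_false, not_and]
      rintro hy rfl; exact hx hy
    rw [this, measure_empty] at hsplit
    rw [← hsplit, Measure.dirac_apply' _ hA]
    simp [hx]
lemma dirac_of_zero_one [TopologicalSpace α] [T2Space α] [BorelSpace α]
    (ν : Measure α) (hreg : ν.Regular) (hν1 : ν Set.univ = 1)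
    (h01 : ∀ A, MeasurableSet A → ν A = 0 ∨ ν A = 1) : ∃ x, ν = Measure.dirac x := by
  haveI := hreg
  haveI : IsFiniteMeasure ν := ⟨by rw [hν1]; exact ENNReal.one_lt_top⟩
  have hcompl : ∀ G : Set α, MeasurableSet G → ν G = 1 → ν Gᶜ = 0 := by
    intro G hG h1
    rw [measure_compl hG (measure_ne_top _ _), hν1, h1, tsub_self]
  -- find a compact set of full measure
  obtain ⟨K, -, hKc, hK2⟩ : ∃ K ⊆ Set.univ, IsCompact K ∧ (1/2 : ENNReal) < ν K :=
    isOpen_univ.exists_lt_isCompact (by rw [hν1]; norm_num)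
  have hK1 : ν K = 1 := by
    rcases h01 K hKc.isClosed.measurableSet with h | h
    · rw [h] at hK2; exact absurd hK2 (by simp)
    · exact h
  -- the family of closed subsets of K of full measure
  set ι := {F : Set α // F ⊆ K ∧ IsClosed F ∧ ν F = 1} with hι
  haveI : Nonempty ι := ⟨⟨K, le_refl _, hKc.isClosed, hK1⟩⟩
  have hfull_inter : ∀ F G : Set α, IsClosed F → IsClosed G → ν F = 1 → ν G = 1 →
      ν (F ∩ G) = 1 := by
    intro F G hF hG h1 h2
    rcases h01 (F ∩ G) (hF.measurableSet.inter hG.measurableSet) with h | h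
    · exfalso
      have hFsub : ν F ≤ ν (F ∩ G) + ν (F \ G) := by
        rw [← measure_inter_add_diff (μ := ν) F hG.measurableSet]
      have : ν (F \ G) ≤ ν Gᶜ := measure_mono (Set.diff_subset_compl F G)
      rw [hcompl G hG.measurableSet h2] at this
      rw [h, zero_add] at hFsub
      have : ν F = 0 := le_antisymm (hFsub.trans this) zero_le
      rw [h1] at this; exact one_ne_zero this
    · exact h
  have hne : (⋂ i : ι, (i : Set α)).Nonempty := by
    apply IsCompact.nonempty_iInter_of_directed_nonempty_isCompact_isClosed
    · rintro ⟨F, hF⟩ ⟨G, hG⟩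
      refine ⟨⟨F ∩ G, Set.inter_subset_left.trans hF.1, hF.2.1.inter hG.2.1,
        hfull_inter F G hF.2.1 hG.2.1 hF.2.2 hG.2.2⟩, ?_, ?_⟩
      · exact Set.inter_subset_left
      · exact Set.inter_subset_right
    · rintro ⟨F, hF⟩
      rw [Set.nonempty_iff_ne_empty]
      rintro rfl
      rw [measure_empty] at hF
      exact one_ne_zero hF.2.2.symm
    · rintro ⟨F, hF⟩
      exact hKc.of_isClosed_subset hF.2.1 hF.1
    · rintro ⟨F, hF⟩
      exact hF.2.1
  obtain ⟨x, hx⟩ := hne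
  have hopen1 : ∀ U : Set α, IsOpen U → x ∈ U → ν U = 1 := by
    intro U hU hxU
    rcases h01 U hU.measurableSet with h | h
    · exfalso
      have hmem : ν (K \ U) = 1 := by
        have := measure_inter_add_diff (μ := ν) K hU.measurableSet
        have h0 : ν (K ∩ U) = 0 := measure_mono_null Set.inter_subset_right h
        rw [h0, zero_add, hK1] at this
        exact this
      have : x ∈ K \ U := by
        have := Set.mem_iInter.1 hx ⟨K \ U, Set.diff_subset,
          hKc.isClosed.sdiff hU, hmem⟩
        exact this
      exact this.2 hxU
    · exact h
  have hx1 : ν {x} = 1 := by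
    refine le_antisymm (hν1 ▸ measure_mono (Set.subset_univ _)) ?_
    rw [Set.measure_eq_iInf_isOpen]
    exact le_iInf fun U => le_iInf fun hU => le_iInf fun hUo =>
      (hopen1 U hUo (hU (Set.mem_singleton x))).ge
  exact ⟨x, eq_dirac_of ν (hcompl {x} (MeasurableSet.singleton x) hx1) hx1⟩

lemma signed_apply_eq (s : SignedMeasure α) {B : Set α} (hB : MeasurableSet B) :
    s B = (s.toJordanDecomposition.posPart B).toReal
      - (s.toJordanDecomposition.negPart B).toReal := by
  conv_lhs => rw [← SignedMeasure.toSignedMeasure_toJordanDecomposition s]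
  show (s.toJordanDecomposition.posPart.toSignedMeasure
    - s.toJordanDecomposition.negPart.toSignedMeasure) B = _
  rw [MeasureTheory.Measure.toSignedMeasure_sub_apply hB]
  rfl

lemma parts_toReal_add (s : SignedMeasure α) {B : Set α} (hB : MeasurableSet B) :
    (s.totalVariation B).toReal = (s.toJordanDecomposition.posPart B).toReal
      + (s.toJordanDecomposition.negPart B).toReal := by
  rw [SignedMeasure.totalVariation, Measure.add_apply,
    ENNReal.toReal_add (measure_ne_top _ _) (measure_ne_top _ _)]

lemma abs_signed_apply_le (s : SignedMeasure α) {B : Set α} (hB : MeasurableSet B) :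
    |s B| ≤ (s.totalVariation Set.univ).toReal := by
  rw [signed_apply_eq s hB]
  have h1 : (s.toJordanDecomposition.posPart B).toReal
      ≤ (s.toJordanDecomposition.posPart Set.univ).toReal :=
    ENNReal.toReal_mono (measure_ne_top _ _) (measure_mono (Set.subset_univ _))
  have h2 : (s.toJordanDecomposition.negPart B).toReal
      ≤ (s.toJordanDecomposition.negPart Set.univ).toReal :=
    ENNReal.toReal_mono (measure_ne_top _ _) (measure_mono (Set.subset_univ _))
  rw [parts_toReal_add s MeasurableSet.univ]
  rw [abs_sub_le_iff]
  constructor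
  · have := ENNReal.toReal_nonneg (a := s.toJordanDecomposition.negPart B)
    have := ENNReal.toReal_nonneg (a := s.toJordanDecomposition.negPart Set.univ)
    linarith
  · have := ENNReal.toReal_nonneg (a := s.toJordanDecomposition.posPart B)
    have := ENNReal.toReal_nonneg (a := s.toJordanDecomposition.posPart Set.univ)
    linarith
lemma eq_dirac_toSigned [MeasurableSingletonClass α] (s : SignedMeasure α) {x : α}
    (htv : (s.totalVariation Set.univ).toReal = 1) (hx : s {x} = 1) :
    s = (Measure.dirac x).toSignedMeasure := by
  set p := s.toJordanDecomposition.posPart with hp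
  set n := s.toJordanDecomposition.negPart with hn
  have hxm : MeasurableSet ({x} : Set α) := MeasurableSet.singleton x
  have h1 : (p {x}).toReal - (n {x}).toReal = 1 := by
    rw [← signed_apply_eq s hxm, hx]
  have h2 : (p Set.univ).toReal + (n Set.univ).toReal = 1 := by
    rw [← parts_toReal_add s MeasurableSet.univ, htv]
  have hple : (p {x}).toReal ≤ (p Set.univ).toReal :=
    ENNReal.toReal_mono (measure_ne_top _ _) (measure_mono (Set.subset_univ _))
  have hnnn : 0 ≤ (n {x}).toReal := ENNReal.toReal_nonneg
  have hnun : 0 ≤ (n Set.univ).toReal := ENNReal.toReal_nonneg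
  have hpx1 : (p {x}).toReal = 1 := by linarith
  have hnuniv : (n Set.univ).toReal = 0 := by linarith
  have hpuniv : (p Set.univ).toReal = 1 := by linarith
  have hn0 : n = 0 := by
    apply Measure.measure_univ_eq_zero.1
    exact (ENNReal.toReal_eq_zero_iff _).1 hnuniv |>.resolve_right (measure_ne_top _ _)
  have hpx : p {x} = 1 := by
    rw [← ENNReal.toReal_eq_one_iff]; exact hpx1
  have hpu : p Set.univ = 1 := by
    rw [← ENNReal.toReal_eq_one_iff]; exact hpuniv
  have hpc : p {x}ᶜ = 0 := by
    rw [measure_compl hxm (measure_ne_top _ _), hpu, hpx, tsub_self]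
  have hpd : p = Measure.dirac x := eq_dirac_of p hpc hpx
  calc s = s.toJordanDecomposition.toSignedMeasure :=
        (SignedMeasure.toSignedMeasure_toJordanDecomposition s).symm
    _ = p.toSignedMeasure - n.toSignedMeasure := rfl
    _ = (Measure.dirac x).toSignedMeasure := by
        rw [Measure.toSignedMeasure_congr hn0, Measure.toSignedMeasure_zero, sub_zero,
          Measure.toSignedMeasure_congr hpd]

lemma neg_one_smul_sm (μ : SignedMeasure α) : (-1 : ℝ) • μ = -μ := by
  apply VectorMeasure.ext
  intro B hB
  rw [VectorMeasure.smul_apply, VectorMeasure.neg_apply, smul_eq_mul, neg_one_mul]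

variable [TopologicalSpace α] [OpensMeasurableSpace α] (g : ZeroAtInftyContinuousMap α ℝ)

lemma g_integrable (ν : Measure α) [IsFiniteMeasure ν] : Integrable (⇑g) ν := by
  have := g.toBCF.integrable ν
  rwa [show ⇑g.toBCF = ⇑g from rfl] at this

lemma g_le (x : α) : g x ≤ ‖g‖ := by
  have := g.toBCF.norm_coe_le_norm x
  rw [ZeroAtInftyContinuousMap.norm_toBCF_eq_norm, show ⇑g.toBCF = ⇑g from rfl] at this
  exact (abs_le.1 this).2

lemma g_int_le (ν : Measure α) [IsFiniteMeasure ν] :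
    ∫ x, g x ∂ν ≤ ‖g‖ * (ν Set.univ).toReal := by
  calc ∫ x, g x ∂ν ≤ ∫ _x, ‖g‖ ∂ν :=
        integral_mono (g_integrable g ν) (integrable_const _) (g_le g)
    _ = (ν Set.univ).toReal • ‖g‖ := integral_const _
    _ = ‖g‖ * (ν Set.univ).toReal := by rw [smul_eq_mul, mul_comm]

lemma g_conc (ν : Measure α) [IsFiniteMeasure ν]
    (hint : ∫ x, g x ∂ν = ‖g‖ * (ν Set.univ).toReal) :
    ν {x | g x ≠ ‖g‖} = 0 := by
  have h0 : ∫ x, (‖g‖ - g x) ∂ν = 0 := by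
    rw [integral_sub (integrable_const _) (g_integrable g ν), integral_const, measureReal_def, hint,
      smul_eq_mul, mul_comm, sub_self]
  have hae := (integral_eq_zero_iff_of_nonneg
    (fun x => sub_nonneg.2 (g_le g x)) ((integrable_const _).sub (g_integrable g ν))).1 h0
  have : ν {x | ¬ (‖g‖ - g x = 0)} = 0 := by
    have := hae
    rw [Filter.EventuallyEq, ae_iff] at this
    simpa using this
  refine measure_mono_null ?_ this
  intro x hx
  simp only [Set.mem_setOf_eq] at hx ⊢
  intro h
  exact hx (by linarith [sub_eq_zero.1 h])

lemma g_int_of_conc (ν : Measure α) [IsFiniteMeasure ν] {c : ℝ}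
    (hc : ν {x | g x ≠ c} = 0) :
    ∫ x, g x ∂ν = c * (ν Set.univ).toReal := by
  have : (⇑g) =ᵐ[ν] fun _ => c := by
    rw [Filter.EventuallyEq, ae_iff]
    simpa using hc
  rw [integral_congr_ae this, integral_const, measureReal_def, smul_eq_mul, mul_comm]
lemma conc_of_mem (s : SignedMeasure α)
    (htv : (s.totalVariation Set.univ).toReal = 1)
    (hint : signedIntegral s g = ‖g‖) :
    s.toJordanDecomposition.posPart {x | g x ≠ ‖g‖} = 0 ∧
      s.toJordanDecomposition.negPart {x | g x ≠ -‖g‖} = 0 := by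
  set p := s.toJordanDecomposition.posPart with hp
  set n := s.toJordanDecomposition.negPart with hn
  set a := (p Set.univ).toReal
  set b := (n Set.univ).toReal
  have hab : a + b = 1 := by rw [← parts_toReal_add s MeasurableSet.univ, htv]
  have h1 : ∫ x, g x ∂p - ∫ x, g x ∂n = ‖g‖ := hint
  have h2 : ∫ x, g x ∂p ≤ ‖g‖ * a := g_int_le g p
  have hneg : ∀ x, (-g) x = -(g x) := fun x => rfl
  have h3 : -∫ x, g x ∂n ≤ ‖g‖ * b := by
    have := g_int_le (-g) n
    rw [norm_neg] at this
    rwa [show ∫ x, (-g) x ∂n = -∫ x, g x ∂n by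
      simp only [hneg]; exact integral_neg _] at this
  have hM : ‖g‖ * a + ‖g‖ * b = ‖g‖ := by rw [← mul_add, hab, mul_one]
  have h2' : ∫ x, g x ∂p = ‖g‖ * a := by linarith
  have h3' : -∫ x, g x ∂n = ‖g‖ * b := by linarith
  constructor
  · exact g_conc g p h2'
  · have := g_conc (-g) n (by
      rw [norm_neg]
      rw [show ∫ x, (-g) x ∂n = -∫ x, g x ∂n by
        simp only [hneg]; exact integral_neg _]
      exact h3')
    rw [norm_neg] at this
    refine measure_mono_null ?_ this
    intro x hx
    simp only [Set.mem_setOf_eq, hneg] at hx ⊢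
    intro h; apply hx; linarith


lemma scaled_toReal {u z : ENNReal} (hu0 : u ≠ 0) (hut : u ≠ ⊤) :
    u.toReal * (u⁻¹ * z).toReal = z.toReal := by
  rw [ENNReal.toReal_mul, ENNReal.toReal_inv, ← mul_assoc,
    mul_inv_cancel₀ (ENNReal.toReal_ne_zero.2 ⟨hu0, hut⟩), one_mul]

variable [T2Space α] [BorelSpace α]

lemma nrm_finite (ν : Measure α) [IsFiniteMeasure ν] {A : Set α}
    (hA : MeasurableSet A) (h0 : ν A ≠ 0) :
    ((ν A)⁻¹ • ν.restrict A) Set.univ = 1 := by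
  rw [Measure.smul_apply, Measure.restrict_apply_univ, smul_eq_mul,
    ENNReal.inv_mul_cancel h0 (measure_ne_top _ _)]

lemma nrm_regular (ν : Measure α) [IsFiniteMeasure ν] (hreg : ν.Regular) {A : Set α}
    (hA : MeasurableSet A) (h0 : ν A ≠ 0) :
    ((ν A)⁻¹ • ν.restrict A).Regular := by
  haveI := hreg
  haveI : (ν.restrict A).Regular :=
    Measure.Regular.restrict_of_measure_ne_top (measure_ne_top _ _)
  exact Measure.Regular.smul (by simp [h0])

lemma nrm_apply (ν : Measure α) {A B : Set α} (hB : MeasurableSet B) :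
    ((ν A)⁻¹ • ν.restrict A) B = (ν A)⁻¹ * ν (B ∩ A) := by
  rw [Measure.smul_apply, Measure.restrict_apply hB, smul_eq_mul]

lemma nrm_null (ν : Measure α) {A N : Set α} (hN : ν N = 0) :
    ((ν A)⁻¹ • ν.restrict A) N = 0 := by
  rw [Measure.smul_apply, smul_eq_mul]
  have : ν.restrict A N = 0 :=
    le_antisymm (le_trans (Measure.restrict_le_self N) hN.le) zero_le
  rw [this, mul_zero]


lemma mem_pos (ν : Measure α) [IsFiniteMeasure ν] (hreg : ν.Regular) (h1 : ν Set.univ = 1)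
    (hconc : ν {x | g x ≠ ‖g‖} = 0) :
    ν.toSignedMeasure.totalVariation.Regular ∧
      (ν.toSignedMeasure.totalVariation Set.univ).toReal = 1 ∧
      signedIntegral ν.toSignedMeasure ⇑g = ‖g‖ := by
  rw [totalVariation_toSigned, signedIntegral_toSigned]
  refine ⟨hreg, by rw [h1]; simp, ?_⟩
  rw [g_int_of_conc g ν hconc, h1]; simp

lemma mem_neg (ν : Measure α) [IsFiniteMeasure ν] (hreg : ν.Regular) (h1 : ν Set.univ = 1)
    (hconc : ν {x | g x ≠ -‖g‖} = 0) :
    (-ν.toSignedMeasure).totalVariation.Regular ∧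
      ((-ν.toSignedMeasure).totalVariation Set.univ).toReal = 1 ∧
      signedIntegral (-ν.toSignedMeasure) ⇑g = ‖g‖ := by
  rw [totalVariation_neg_toSigned, signedIntegral_neg_toSigned]
  refine ⟨hreg, by rw [h1]; simp, ?_⟩
  rw [g_int_of_conc g ν hconc, h1]; simp

lemma dirac_conc_pos {x : α} (hx : g x = ‖g‖) :
    Measure.dirac x {y | g y ≠ ‖g‖} = 0 := by
  rw [Measure.dirac_apply' _ (by
    exact (measurableSet_eq_fun (g.continuous.measurable) measurable_const).compl)]
  simp [hx]

lemma dirac_conc_neg {x : α} (hx : g x = -‖g‖) :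
    Measure.dirac x {y | g y ≠ -‖g‖} = 0 := by
  rw [Measure.dirac_apply' _ (by
    exact (measurableSet_eq_fun (g.continuous.measurable) measurable_const).compl)]
  simp [hx]


lemma dirac_toSigned_singleton (x : α) :
    (Measure.dirac x).toSignedMeasure {x} = 1 := by
  rw [Measure.toSignedMeasure_apply_measurable (MeasurableSet.singleton x), measureReal_def,
    Measure.dirac_apply_of_mem (Set.mem_singleton x), ENNReal.toReal_one]

lemma dirac_extreme_aux {x : α}
    {μ₁ μ₂ : SignedMeasure α}
    (h₁ : (μ₁.totalVariation Set.univ).toReal = 1)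
    (h₂ : (μ₂.totalVariation Set.univ).toReal = 1)
    {c : ℝ} (hc : c = 1 ∨ c = -1)
    (hseg : c • (Measure.dirac x).toSignedMeasure ∈ openSegment ℝ μ₁ μ₂) :
    μ₁ = c • (Measure.dirac x).toSignedMeasure ∧
      μ₂ = c • (Measure.dirac x).toSignedMeasure := by
  obtain ⟨a, b, ha, hb, hab, heq⟩ := hseg
  have hxm : MeasurableSet ({x} : Set α) := MeasurableSet.singleton x
  have hb₁ : |μ₁ {x}| ≤ 1 := h₁ ▸ abs_signed_apply_le μ₁ hxm
  have hb₂ : |μ₂ {x}| ≤ 1 := h₂ ▸ abs_signed_apply_le μ₂ hxm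
  have heval : a * μ₁ {x} + b * μ₂ {x} = c * 1 := by
    calc a * μ₁ {x} + b * μ₂ {x} = (a • μ₁ + b • μ₂) {x} := by
          rw [VectorMeasure.add_apply, VectorMeasure.smul_apply,
            VectorMeasure.smul_apply, smul_eq_mul, smul_eq_mul]
      _ = (c • (Measure.dirac x).toSignedMeasure) {x} := by rw [heq]
      _ = c * 1 := by
          rw [VectorMeasure.smul_apply, smul_eq_mul, dirac_toSigned_singleton]
  rcases hc with rfl | rfl
  · have hc₁ : μ₁ {x} = 1 := by
      nlinarith [abs_le.1 hb₁, abs_le.1 hb₂]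
    have hc₂ : μ₂ {x} = 1 := by
      nlinarith [abs_le.1 hb₁, abs_le.1 hb₂]
    rw [one_smul]
    exact ⟨eq_dirac_toSigned μ₁ h₁ hc₁, eq_dirac_toSigned μ₂ h₂ hc₂⟩
  · have hc₁ : μ₁ {x} = -1 := by
      nlinarith [abs_le.1 hb₁, abs_le.1 hb₂]
    have hc₂ : μ₂ {x} = -1 := by
      nlinarith [abs_le.1 hb₁, abs_le.1 hb₂]
    have e₁ : -μ₁ = (Measure.dirac x).toSignedMeasure := by
      apply eq_dirac_toSigned
      · rwa [SignedMeasure.totalVariation_neg]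
      · rw [VectorMeasure.neg_apply, hc₁, neg_neg]
    have e₂ : -μ₂ = (Measure.dirac x).toSignedMeasure := by
      apply eq_dirac_toSigned
      · rwa [SignedMeasure.totalVariation_neg]
      · rw [VectorMeasure.neg_apply, hc₂, neg_neg]
    constructor
    · rw [neg_one_smul_sm, ← e₁, neg_neg]
    · rw [neg_one_smul_sm, ← e₂, neg_neg]


lemma nrm_isFinite (ν : Measure α) [IsFiniteMeasure ν] {A : Set α}
    (hA : MeasurableSet A) (h0 : ν A ≠ 0) :
    IsFiniteMeasure ((ν A)⁻¹ • ν.restrict A) :=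
  ⟨by rw [nrm_finite ν hA h0]; exact ENNReal.one_lt_top⟩

lemma nrm_toSigned_apply (ν : Measure α) [IsFiniteMeasure ν] {A B : Set α}
    (hA : MeasurableSet A) (h0 : ν A ≠ 0) (hB : MeasurableSet B) :
    haveI := nrm_isFinite ν hA h0
    ((ν A)⁻¹ • ν.restrict A).toSignedMeasure B = ((ν A)⁻¹ * ν (B ∩ A)).toReal := by
  haveI := nrm_isFinite ν hA h0
  rw [Measure.toSignedMeasure_apply_measurable hB, measureReal_def, nrm_apply ν hB]

lemma extreme_is_dirac (hg : g ≠ 0) (s : SignedMeasure α)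
    (hreg : s.totalVariation.Regular)
    (htv : (s.totalVariation Set.univ).toReal = 1)
    (hint : signedIntegral s ⇑g = ‖g‖)
    (hext : ∀ μ₁ : SignedMeasure α, (μ₁.totalVariation.Regular ∧
        (μ₁.totalVariation Set.univ).toReal = 1 ∧ signedIntegral μ₁ ⇑g = ‖g‖) →
      ∀ μ₂ : SignedMeasure α, (μ₂.totalVariation.Regular ∧
        (μ₂.totalVariation Set.univ).toReal = 1 ∧ signedIntegral μ₂ ⇑g = ‖g‖) →
      s ∈ openSegment ℝ μ₁ μ₂ → μ₁ = s ∧ μ₂ = s) :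
    ∃ x, |g x| = ‖g‖ ∧ s = Real.sign (g x) • (Measure.dirac x).toSignedMeasure := by
  have hM : (0:ℝ) < ‖g‖ := norm_pos_iff.2 hg
  set p := s.toJordanDecomposition.posPart with hpdef
  set n := s.toJordanDecomposition.negPart with hndef
  obtain ⟨hpc, hnc⟩ := conc_of_mem g s htv hint
  obtain ⟨hpreg, hnreg⟩ := parts_regular s hreg
  have hab : (p Set.univ).toReal + (n Set.univ).toReal = 1 := by
    rw [← parts_toReal_add s MeasurableSet.univ, htv]
  have s_eq : ∀ B : Set α, MeasurableSet B → s B = (p B).toReal - (n B).toReal :=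
    fun B hB => signed_apply_eq s hB
  -- not both parts are nonzero
  have hone : n Set.univ = 0 ∨ p Set.univ = 0 := by
    by_contra hcon
    push_neg at hcon
    obtain ⟨hn0, hp0⟩ := hcon
    haveI h₁ := nrm_isFinite p MeasurableSet.univ hp0
    haveI h₂ := nrm_isFinite n MeasurableSet.univ hn0
    set m₁ : Measure α := (p Set.univ)⁻¹ • p.restrict Set.univ with hm₁
    set m₂ : Measure α := (n Set.univ)⁻¹ • n.restrict Set.univ with hm₂
    have mem₁ := mem_pos g m₁ (nrm_regular p hpreg MeasurableSet.univ hp0)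
      (nrm_finite p MeasurableSet.univ hp0) (nrm_null p hpc)
    have mem₂ := mem_neg g m₂ (nrm_regular n hnreg MeasurableSet.univ hn0)
      (nrm_finite n MeasurableSet.univ hn0) (nrm_null n hnc)
    set a := (p Set.univ).toReal
    set b := (n Set.univ).toReal
    have ha : 0 < a := ENNReal.toReal_pos hp0 (measure_ne_top _ _)
    have hb : 0 < b := ENNReal.toReal_pos hn0 (measure_ne_top _ _)
    have heq : a • m₁.toSignedMeasure + b • (-m₂.toSignedMeasure) = s := by
      apply VectorMeasure.ext
      intro B hB
      rw [VectorMeasure.add_apply, VectorMeasure.smul_apply, VectorMeasure.smul_apply,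
        smul_eq_mul, smul_eq_mul, VectorMeasure.neg_apply,
        nrm_toSigned_apply p MeasurableSet.univ hp0 hB,
        nrm_toSigned_apply n MeasurableSet.univ hn0 hB,
        Set.inter_univ, s_eq B hB]
      rw [mul_neg]
      rw [show a * ((p Set.univ)⁻¹ * p B).toReal = (p B).toReal from
        scaled_toReal hp0 (measure_ne_top _ _),
        show b * ((n Set.univ)⁻¹ * n B).toReal = (n B).toReal from
        scaled_toReal hn0 (measure_ne_top _ _)]
      ring
    obtain ⟨e₁, e₂⟩ := hext m₁.toSignedMeasure mem₁ (-m₂.toSignedMeasure) mem₂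
      ⟨a, b, ha, hb, hab, heq⟩
    have : m₁.toSignedMeasure Set.univ = (-m₂.toSignedMeasure) Set.univ := by
      rw [e₁, e₂]
    rw [VectorMeasure.neg_apply,
      Measure.toSignedMeasure_apply_measurable MeasurableSet.univ,
      Measure.toSignedMeasure_apply_measurable MeasurableSet.univ, measureReal_def, measureReal_def,
      nrm_finite p MeasurableSet.univ hp0, nrm_finite n MeasurableSet.univ hn0] at this
    norm_num at this
  rcases hone with hn | hp
  -- positive case : s = p.toSignedMeasure
  · have hn0 : n = 0 := Measure.measure_univ_eq_zero.1 hn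
    have s_eqp : s = p.toSignedMeasure := by
      calc s = s.toJordanDecomposition.toSignedMeasure :=
            (SignedMeasure.toSignedMeasure_toJordanDecomposition s).symm
        _ = p.toSignedMeasure - n.toSignedMeasure := rfl
        _ = p.toSignedMeasure := by
            rw [Measure.toSignedMeasure_congr hn0, Measure.toSignedMeasure_zero, sub_zero]
    have hp1 : (p Set.univ).toReal = 1 := by
      rw [hn] at hab; simpa using hab
    have hpu : p Set.univ = 1 := (ENNReal.toReal_eq_one_iff _).1 hp1
    have h01 : ∀ A : Set α, MeasurableSet A → p A = 0 ∨ p A = 1 := by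
      intro A hA
      by_contra hcon
      push_neg at hcon
      obtain ⟨hA0, hA1⟩ := hcon
      have hsum : p A + p Aᶜ = 1 := by rw [measure_add_measure_compl hA, hpu]
      have hAc0 : p Aᶜ ≠ 0 := by
        intro h; rw [h, add_zero] at hsum; exact hA1 hsum
      haveI := nrm_isFinite p hA hA0
      haveI := nrm_isFinite p hA.compl hAc0
      set m₁ : Measure α := (p A)⁻¹ • p.restrict A
      set m₂ : Measure α := (p Aᶜ)⁻¹ • p.restrict Aᶜ
      have mem₁ := mem_pos g m₁ (nrm_regular p hpreg hA hA0)
        (nrm_finite p hA hA0) (nrm_null p hpc)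
      have mem₂ := mem_pos g m₂ (nrm_regular p hpreg hA.compl hAc0)
        (nrm_finite p hA.compl hAc0) (nrm_null p hpc)
      set a := (p A).toReal
      set b := (p Aᶜ).toReal
      have ha : 0 < a := ENNReal.toReal_pos hA0 (measure_ne_top _ _)
      have hb : 0 < b := ENNReal.toReal_pos hAc0 (measure_ne_top _ _)
      have hab' : a + b = 1 := by
        rw [← ENNReal.toReal_add (measure_ne_top _ _) (measure_ne_top _ _), hsum,
          ENNReal.toReal_one]
      have heq : a • m₁.toSignedMeasure + b • m₂.toSignedMeasure = s := by
        apply VectorMeasure.ext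
        intro B hB
        rw [VectorMeasure.add_apply, VectorMeasure.smul_apply, VectorMeasure.smul_apply,
          smul_eq_mul, smul_eq_mul,
          nrm_toSigned_apply p hA hA0 hB,
          nrm_toSigned_apply p hA.compl hAc0 hB, s_eq B hB]
        have hnB : (n B).toReal = 0 := by rw [hn0]; simp
        rw [show a * ((p A)⁻¹ * p (B ∩ A)).toReal = (p (B ∩ A)).toReal from
            scaled_toReal hA0 (measure_ne_top _ _),
          show b * ((p Aᶜ)⁻¹ * p (B ∩ Aᶜ)).toReal = (p (B ∩ Aᶜ)).toReal from
            scaled_toReal hAc0 (measure_ne_top _ _), hnB,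
          ← ENNReal.toReal_add (measure_ne_top _ _) (measure_ne_top _ _),
          show B ∩ Aᶜ = B \ A from (Set.diff_eq B A).symm,
          measure_inter_add_diff B hA]
        ring
      obtain ⟨e₁, e₂⟩ := hext _ mem₁ _ mem₂ ⟨a, b, ha, hb, hab', heq⟩
      have hAeq : m₁.toSignedMeasure A = m₂.toSignedMeasure A := by rw [e₁, e₂]
      rw [nrm_toSigned_apply p hA hA0 hA, nrm_toSigned_apply p hA.compl hAc0 hA,
        Set.inter_self, Set.inter_compl_self, measure_empty, mul_zero,
        ENNReal.inv_mul_cancel hA0 (measure_ne_top _ _)] at hAeq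
      simp at hAeq
    obtain ⟨x, hpd⟩ := dirac_of_zero_one p hpreg hpu h01
    have hpc' : p {y | g y ≠ ‖g‖} = 0 := hpc
    rw [hpd] at hpc'
    have hgx : g x = ‖g‖ := by
      by_contra hne
      rw [Measure.dirac_apply' _ (by
        exact (measurableSet_eq_fun (g.continuous.measurable) measurable_const).compl)]
        at hpc'
      rw [Set.indicator_of_mem (by exact hne)] at hpc'
      simp at hpc'
    refine ⟨x, by rw [hgx]; exact abs_of_pos hM, ?_⟩
    rw [hgx, Real.sign_of_pos hM, one_smul, s_eqp, Measure.toSignedMeasure_congr hpd]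
  -- negative case : s = -n.toSignedMeasure
  · have hp0 : p = 0 := Measure.measure_univ_eq_zero.1 hp
    have s_eqn : s = -n.toSignedMeasure := by
      calc s = s.toJordanDecomposition.toSignedMeasure :=
            (SignedMeasure.toSignedMeasure_toJordanDecomposition s).symm
        _ = p.toSignedMeasure - n.toSignedMeasure := rfl
        _ = -n.toSignedMeasure := by
            rw [Measure.toSignedMeasure_congr hp0, Measure.toSignedMeasure_zero, zero_sub]
    have hn1 : (n Set.univ).toReal = 1 := by
      rw [hp] at hab; simpa using hab
    have hnu : n Set.univ = 1 := (ENNReal.toReal_eq_one_iff _).1 hn1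
    have h01 : ∀ A : Set α, MeasurableSet A → n A = 0 ∨ n A = 1 := by
      intro A hA
      by_contra hcon
      push_neg at hcon
      obtain ⟨hA0, hA1⟩ := hcon
      have hsum : n A + n Aᶜ = 1 := by rw [measure_add_measure_compl hA, hnu]
      have hAc0 : n Aᶜ ≠ 0 := by
        intro h; rw [h, add_zero] at hsum; exact hA1 hsum
      haveI := nrm_isFinite n hA hA0
      haveI := nrm_isFinite n hA.compl hAc0
      set m₁ : Measure α := (n A)⁻¹ • n.restrict A
      set m₂ : Measure α := (n Aᶜ)⁻¹ • n.restrict Aᶜ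
      have mem₁ := mem_neg g m₁ (nrm_regular n hnreg hA hA0)
        (nrm_finite n hA hA0) (nrm_null n hnc)
      have mem₂ := mem_neg g m₂ (nrm_regular n hnreg hA.compl hAc0)
        (nrm_finite n hA.compl hAc0) (nrm_null n hnc)
      set a := (n A).toReal
      set b := (n Aᶜ).toReal
      have ha : 0 < a := ENNReal.toReal_pos hA0 (measure_ne_top _ _)
      have hb : 0 < b := ENNReal.toReal_pos hAc0 (measure_ne_top _ _)
      have hab' : a + b = 1 := by
        rw [← ENNReal.toReal_add (measure_ne_top _ _) (measure_ne_top _ _), hsum,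
          ENNReal.toReal_one]
      have heq : a • (-m₁.toSignedMeasure) + b • (-m₂.toSignedMeasure) = s := by
        apply VectorMeasure.ext
        intro B hB
        rw [VectorMeasure.add_apply, VectorMeasure.smul_apply, VectorMeasure.smul_apply,
          smul_eq_mul, smul_eq_mul, VectorMeasure.neg_apply, VectorMeasure.neg_apply,
          nrm_toSigned_apply n hA hA0 hB,
          nrm_toSigned_apply n hA.compl hAc0 hB, s_eq B hB]
        have hpB : (p B).toReal = 0 := by rw [hp0]; simp
        rw [mul_neg, mul_neg,
          show a * ((n A)⁻¹ * n (B ∩ A)).toReal = (n (B ∩ A)).toReal from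
            scaled_toReal hA0 (measure_ne_top _ _),
          show b * ((n Aᶜ)⁻¹ * n (B ∩ Aᶜ)).toReal = (n (B ∩ Aᶜ)).toReal from
            scaled_toReal hAc0 (measure_ne_top _ _), hpB]
        rw [show (-(n (B ∩ A)).toReal + -(n (B ∩ Aᶜ)).toReal)
            = -((n (B ∩ A)).toReal + (n (B ∩ Aᶜ)).toReal) by ring,
          ← ENNReal.toReal_add (measure_ne_top _ _) (measure_ne_top _ _),
          show B ∩ Aᶜ = B \ A from (Set.diff_eq B A).symm,
          measure_inter_add_diff B hA]
        ring
      obtain ⟨e₁, e₂⟩ := hext _ mem₁ _ mem₂ ⟨a, b, ha, hb, hab', heq⟩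
      have hAeq : (-m₁.toSignedMeasure) A = (-m₂.toSignedMeasure) A := by rw [e₁, e₂]
      rw [VectorMeasure.neg_apply, VectorMeasure.neg_apply,
        nrm_toSigned_apply n hA hA0 hA, nrm_toSigned_apply n hA.compl hAc0 hA,
        Set.inter_self, Set.inter_compl_self, measure_empty, mul_zero,
        ENNReal.inv_mul_cancel hA0 (measure_ne_top _ _)] at hAeq
      simp at hAeq
    obtain ⟨x, hnd⟩ := dirac_of_zero_one n hnreg hnu h01
    have hnc' : n {y | g y ≠ -‖g‖} = 0 := hnc
    rw [hnd] at hnc'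
    have hgx : g x = -‖g‖ := by
      by_contra hne
      rw [Measure.dirac_apply' _ (by
        exact (measurableSet_eq_fun (g.continuous.measurable) measurable_const).compl)]
        at hnc'
      rw [Set.indicator_of_mem (by exact hne)] at hnc'
      simp at hnc'
    refine ⟨x, by rw [hgx, abs_neg]; exact abs_of_pos hM, ?_⟩
    have hsgn : Real.sign (g x) = -1 := Real.sign_of_neg (by rw [hgx]; linarith)
    rw [hsgn, neg_one_smul_sm, s_eqn, Measure.toSignedMeasure_congr hnd]

end Aux

/-- For a nonzero `g ∈ C₀(X')`, the extreme points of the subdifferential of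
the supremum norm at `g`, viewed inside `M(X') = C₀(X')*` (regular measures
`μ` with `‖μ‖_TV = 1` and `∫ g dμ = ‖g‖_∞`), are exactly the measures
`sign(g(x')) δ_{x'}` for `x'` with `|g(x')| = ‖g‖_∞`. -/
theorem stmt_18 {X' : Type*} [TopologicalSpace X'] [LocallyCompactSpace X']
    [T2Space X'] [MeasurableSpace X'] [BorelSpace X']
    (g : ZeroAtInftyContinuousMap X' ℝ) (hg : g ≠ 0) :
    ({μ : SignedMeasure X' | μ.totalVariation.Regular ∧
        (μ.totalVariation Set.univ).toReal = 1 ∧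
        signedIntegral μ g = ‖g‖}.extremePoints ℝ) =
      {μ : SignedMeasure X' | ∃ x' : X', |g x'| = ‖g‖ ∧
        μ = Real.sign (g x') • (Measure.dirac x').toSignedMeasure} := by
  have hM : (0:ℝ) < ‖g‖ := norm_pos_iff.2 hg
  ext s
  constructor
  · intro hs
    rw [mem_extremePoints] at hs
    obtain ⟨⟨hreg, htv, hint⟩, hext⟩ := hs
    obtain ⟨x, hx1, hx2⟩ := extreme_is_dirac g hg s hreg htv hint
      (fun μ₁ h₁ μ₂ h₂ hseg => hext μ₁ h₁ μ₂ h₂ hseg)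
    exact ⟨x, hx1, hx2⟩
  · rintro ⟨x, hx, rfl⟩
    rw [mem_extremePoints]
    have hgx0 : g x ≠ 0 := by
      intro h; rw [h] at hx; simp at hx; exact hM.ne' hx.symm
    have hsign : Real.sign (g x) = 1 ∨ Real.sign (g x) = -1 := by
      rcases lt_or_gt_of_ne hgx0 with h | h
      · right; exact Real.sign_of_neg h
      · left; exact Real.sign_of_pos h
    constructor
    · rcases lt_or_gt_of_ne hgx0 with h | h
      · have hgx : g x = -‖g‖ := by
          rw [abs_of_neg h] at hx; linarith
        rw [show Real.sign (g x) = -1 from Real.sign_of_neg h, neg_one_smul_sm]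
        exact mem_neg g _ (dirac_regular x) (by simp) (dirac_conc_neg g hgx)
      · have hgx : g x = ‖g‖ := by rw [abs_of_pos h] at hx; exact hx
        rw [show Real.sign (g x) = 1 from Real.sign_of_pos h, one_smul]
        exact mem_pos g _ (dirac_regular x) (by simp) (dirac_conc_pos g hgx)
    · intro μ₁ h₁ μ₂ h₂ hseg
      exact dirac_extreme_aux h₁.2.1 h₂.2.1 hsign hseg
end
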